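/- arXiv:1501.06528 — 5 statements merged into one kernel-verified Lean document; each statement's English description precedes it below -/
import Mathlib

section
/- For every power of two n ≥ 4, every 1 ≤ i ≤ n/2, and every s ∈ [0,1], the odd-indexed conditional rank satisfies ρ(n, 2i−1, s) = 2ρ(n/2, i, s) − ρ(n/2, i, s)² = ℓ(ρ(n/2, i, s)), where ℓ(x) = 2x − x². -/
open scoped Classical

/-- The Sierpinski matrix `G_n` for `n = 2^k`: the `k`-fold Kronecker power of
`[[1,1],[0,1]]`, whose `(i,j)` entry is `1` iff the bits of `i` form a submask of the
bits of `j`. -/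
def Gmat (F : Type*) [Field F] (k : ℕ) : Matrix (Fin (2 ^ k)) (Fin (2 ^ k)) F :=
  fun i j => if (i : ℕ) &&& (j : ℕ) = (i : ℕ) then 1 else 0

/-- `expRank F M s` is the expected rank of the random column submatrix `M[s]`, where each
column of `M` is kept independently with probability `s`. -/
noncomputable def expRank (F : Type*) [Field F] {m n : ℕ} (M : Matrix (Fin m) (Fin n) F)
    (s : ℝ) : ℝ :=
  ∑ S : Finset (Fin n), s ^ S.card * (1 - s) ^ (n - S.card) *
    ((M.submatrix id (fun j : S => (j : Fin n))).rank : ℝ)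

/-- The submatrix `M^{(i)}` of a square matrix formed by its first `i` rows. -/
def topRows (F : Type*) [Field F] {N : ℕ} (M : Matrix (Fin N) (Fin N) F) (i : ℕ) :
    Matrix (Fin (min i N)) (Fin N) F :=
  fun r c => M ⟨r, lt_of_lt_of_le r.2 (min_le_right i N)⟩ c

/-- The conditional rank `ρ(n, i, s)` with `n = 2^k` (1-indexed in `i`):
`E[rank G_n^{(i)}[s]] − E[rank G_n^{(i−1)}[s]]` (for `i = 1` the subtracted term is `0`). -/
noncomputable def rho (F : Type*) [Field F] (k : ℕ) (i : ℕ) (s : ℝ) : ℝ :=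
  expRank F (topRows F (Gmat F k) i) s - expRank F (topRows F (Gmat F k) (i - 1)) s

/-- `prEvent n s P` is the probability of the event `P` over a random subset of `{1,…,n}`
including each element independently with probability `s`. -/
noncomputable def prEvent (n : ℕ) (s : ℝ) (P : Finset (Fin n) → Prop) : ℝ :=
  ∑ S : Finset (Fin n), if P S then s ^ S.card * (1 - s) ^ (n - S.card) else 0

namespace RhoOdd

open Submodule Module Finset Matrix

/-! ### Bit arithmetic -/

lemma land_lt_two {b d : ℕ} (hb : b < 2) (hd : d < 2) : b &&& d < 2 := by
  interval_cases b <;> interval_cases d <;> decide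

lemma land_pair (a b c d : ℕ) (hb : b < 2) (hd : d < 2) :
    (2*a+b) &&& (2*c+d) = 2*(a &&& c) + (b &&& d) := by
  apply Nat.eq_of_testBit_eq
  intro n
  cases n with
  | zero =>
    simp only [Nat.testBit_land, Nat.testBit_zero, Nat.mul_add_mod]
    interval_cases b <;> interval_cases d <;> simp <;> omega
  | succ n =>
    have h1 : (2*a+b)/2 = a := by omega
    have h2 : (2*c+d)/2 = c := by omega
    have h3 : (2*(a&&&c)+(b&&&d))/2 = a&&&c := by
      have := land_lt_two hb hd; omega
    rw [Nat.testBit_land, Nat.testBit_succ, Nat.testBit_succ, Nat.testBit_succ,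
      h1, h2, h3, Nat.testBit_land]

variable (F : Type*) [Field F]

/-! ### Rows of the Sierpinski matrix, zeroed outside a column subset -/

/-- The `a`-th row of the Sierpinski matrix, as a total function of `a : ℕ`. -/
def grow (k a : ℕ) : Fin (2^k) → F := fun c => if a &&& (c : ℕ) = a then 1 else 0

/-- The `a`-th row of the Sierpinski matrix with entries outside `T` zeroed. -/
def zg (k : ℕ) (T : Finset (Fin (2^k))) (a : ℕ) : Fin (2^k) → F :=
  fun c => if c ∈ T then grow F k a c else 0

/-- Span of the first `i` zeroed rows. -/
noncomputable def spanTop (k i : ℕ) (T : Finset (Fin (2^k))) : Submodule F (Fin (2^k) → F) :=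
  Submodule.span F (zg F k T '' Set.Iio i)

instance (k i : ℕ) (T : Finset (Fin (2^k))) : FiniteDimensional F (spanTop F k i T) :=
  FiniteDimensional.span_of_finite F ((Set.finite_Iio i).image _)

noncomputable def wtF (m : ℕ) (s : ℝ) (T : Finset (Fin m)) : ℝ :=
  s ^ T.card * (1-s) ^ (m - T.card)

noncomputable def epsF (k i : ℕ) (T : Finset (Fin (2^k))) : ℝ :=
  if zg F k T (i-1) ∈ spanTop F k (i-1) T then 0 else 1

/-! ### Rank of a column submatrix via zeroed rows -/

def zmat {r N : ℕ} (M : Matrix (Fin r) (Fin N) F) (S : Finset (Fin N)) :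
    Matrix (Fin r) (Fin N) F := fun a j => if j ∈ S then M a j else 0

lemma rank_sub_eq_zmat {r N : ℕ} (M : Matrix (Fin r) (Fin N) F) (S : Finset (Fin N)) :
    (M.submatrix id (fun j : S => (j : Fin N))).rank = (zmat F M S).rank := by
  rw [Matrix.rank_eq_finrank_span_cols, Matrix.rank_eq_finrank_span_cols]
  refine congrArg (fun p : Submodule F (Fin r → F) => finrank F p) ?_
  apply le_antisymm <;> rw [Submodule.span_le]
  · rintro _ ⟨j, rfl⟩
    apply Submodule.subset_span
    refine ⟨(j : Fin N), funext fun a => ?_⟩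
    simp [zmat, Matrix.transpose_apply, Matrix.submatrix_apply, j.2]
  · rintro _ ⟨j, rfl⟩
    by_cases hj : j ∈ S
    · apply Submodule.subset_span
      refine ⟨⟨j, hj⟩, funext fun a => ?_⟩
      simp [zmat, Matrix.transpose_apply, Matrix.submatrix_apply, hj]
    · have hz : (zmat F M S)ᵀ j = 0 := funext fun a => by
        simp [zmat, Matrix.transpose_apply, hj]
      rw [show (zmat F M S).col j = (zmat F M S)ᵀ j from rfl, hz]; exact Submodule.zero_mem _

lemma rank_top_eq (k i : ℕ) (hi : i ≤ 2^k) (S : Finset (Fin (2^k))) :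
    ((topRows F (Gmat F k) i).submatrix id (fun j : S => (j : Fin (2^k)))).rank
      = finrank F (spanTop F k i S) := by
  rw [rank_sub_eq_zmat, Matrix.rank_eq_finrank_span_row]
  unfold spanTop
  refine congrArg (fun t : Set (Fin (2^k) → F) => finrank F (Submodule.span F t)) ?_
  ext x
  simp only [Set.mem_range, Set.mem_image, Set.mem_Iio]
  constructor
  · rintro ⟨r, rfl⟩
    refine ⟨r.1, lt_of_lt_of_le r.2 (min_le_left _ _), rfl⟩
  · rintro ⟨a, ha, rfl⟩
    exact ⟨⟨a, lt_min ha (lt_of_lt_of_le ha hi)⟩, rfl⟩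

/-! ### Adding one vector to a finite-dimensional subspace -/

lemma finrank_sup_singleton {V : Type*} [AddCommGroup V] [Module F V]
    (U : Submodule F V) [FiniteDimensional F U] (w : V) :
    finrank F ↥(U ⊔ Submodule.span F {w}) = finrank F U + (if w ∈ U then 0 else 1) := by
  by_cases hw : w ∈ U
  · rw [if_pos hw, sup_eq_left.2 (Submodule.span_le.2 (by simpa using hw)), add_zero]
  · rw [if_neg hw]
    have h0 : w ≠ 0 := fun h => hw (h ▸ U.zero_mem)
    have hinf : U ⊓ Submodule.span F {w} = ⊥ := by
      rw [eq_bot_iff]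
      rintro x hx
      rcases Submodule.mem_inf.1 hx with ⟨hxU, hxw⟩
      rcases Submodule.mem_span_singleton.1 hxw with ⟨c, rfl⟩
      rcases eq_or_ne c 0 with rfl | hc
      · simp
      · have hcw : c⁻¹ • (c • w) = w := by rw [smul_smul, inv_mul_cancel₀ hc, one_smul]
        exact absurd (hcw ▸ U.smul_mem c⁻¹ hxU) hw
    have key := Submodule.finrank_sup_add_finrank_inf_eq U (Submodule.span F {w})
    rw [hinf, finrank_bot, finrank_span_singleton h0] at key
    omega

lemma finrank_spanTop_succ (k t : ℕ) (T : Finset (Fin (2^k))) :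
    finrank F (spanTop F k (t+1) T)
      = finrank F (spanTop F k t T) + (if zg F k T t ∈ spanTop F k t T then 0 else 1) := by
  have hIio : Set.Iio (t+1) = Set.Iio t ∪ {t} := by ext x; simp
  rw [show spanTop F k (t+1) T = spanTop F k t T ⊔ Submodule.span F {zg F k T t} from ?_]
  · exact finrank_sup_singleton F _ _
  · unfold spanTop
    rw [hIio, Set.image_union, Set.image_singleton, Submodule.span_union]

/-! ### Product-space structure -/

lemma pow_succ_two (k : ℕ) : 2^(k+1) = 2 * 2^k := by rw [pow_succ]; ring

def emb0 (k : ℕ) (c : Fin (2^k)) : Fin (2^(k+1)) :=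
  ⟨2*c.1, by have := c.2; have := pow_succ_two k; omega⟩

def emb1 (k : ℕ) (c : Fin (2^k)) : Fin (2^(k+1)) :=
  ⟨2*c.1+1, by have := c.2; have := pow_succ_two k; omega⟩

/-- The even/odd splitting of coordinates, as a linear equivalence. -/
def phi (k : ℕ) : (Fin (2^(k+1)) → F) ≃ₗ[F] (Fin (2^k) → F) × (Fin (2^k) → F) where
  toFun f := (fun c => f (emb0 k c), fun c => f (emb1 k c))
  map_add' f g := rfl
  map_smul' r f := rfl
  invFun p := fun j => if (j : ℕ) % 2 = 0
    then p.1 ⟨(j : ℕ)/2, by have := j.2; have := pow_succ_two k; omega⟩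
    else p.2 ⟨(j : ℕ)/2, by have := j.2; have := pow_succ_two k; omega⟩
  left_inv f := by
    funext j
    dsimp only
    by_cases hj : (j : ℕ) % 2 = 0
    · rw [if_pos hj]
      exact congrArg f (Fin.ext (by simp only [emb0]; omega))
    · rw [if_neg hj]
      exact congrArg f (Fin.ext (by simp only [emb1]; omega))
  right_inv p := by
    refine Prod.ext (funext fun c => ?_) (funext fun c => ?_) <;> dsimp only
    · have h : ((emb0 k c : Fin (2^(k+1))) : ℕ) % 2 = 0 := by
        simp only [emb0]; omega
      rw [if_pos h]
      exact congrArg p.1 (Fin.ext (by simp only [emb0]; omega))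
    · have h : ¬ ((emb1 k c : Fin (2^(k+1))) : ℕ) % 2 = 0 := by
        simp only [emb1]; omega
      rw [if_neg h]
      exact congrArg p.2 (Fin.ext (by simp only [emb1]; omega))

/-- The two halves of a subset of `Fin (2^(k+1))`. -/
def side0 (k : ℕ) (S : Finset (Fin (2^(k+1)))) : Finset (Fin (2^k)) :=
  Finset.univ.filter fun c => emb0 k c ∈ S

def side1 (k : ℕ) (S : Finset (Fin (2^(k+1)))) : Finset (Fin (2^k)) :=
  Finset.univ.filter fun c => emb1 k c ∈ S

lemma phi_zg_even (k : ℕ) (S : Finset (Fin (2^(k+1)))) (a : ℕ) :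
    phi F k (zg F (k+1) S (2*a)) = (zg F k (side0 k S) a, zg F k (side1 k S) a) := by
  refine Prod.ext (funext fun c => ?_) (funext fun c => ?_)
  · show (if emb0 k c ∈ S then grow F (k+1) (2*a) (emb0 k c) else 0)
      = if c ∈ side0 k S then grow F k a c else 0
    have hmem : c ∈ side0 k S ↔ emb0 k c ∈ S := by simp [side0]
    have hg : grow F (k+1) (2*a) (emb0 k c) = grow F k a c := by
      unfold grow
      have : (2*a) &&& ((emb0 k c : Fin (2^(k+1))) : ℕ) = 2*(a &&& c.1) := by
        have := land_pair a 0 c.1 0 (by omega) (by omega)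
        simpa [emb0] using this
      rw [this]
      by_cases h : a &&& c.1 = a
      · rw [if_pos (by omega), if_pos h]
      · rw [if_neg (by omega), if_neg h]
    rw [hg]
    by_cases h : emb0 k c ∈ S
    · rw [if_pos h, if_pos (hmem.2 h)]
    · rw [if_neg h, if_neg (fun hc => h (hmem.1 hc))]
  · show (if emb1 k c ∈ S then grow F (k+1) (2*a) (emb1 k c) else 0)
      = if c ∈ side1 k S then grow F k a c else 0
    have hmem : c ∈ side1 k S ↔ emb1 k c ∈ S := by simp [side1]
    have hg : grow F (k+1) (2*a) (emb1 k c) = grow F k a c := by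
      unfold grow
      have : (2*a) &&& ((emb1 k c : Fin (2^(k+1))) : ℕ) = 2*(a &&& c.1) := by
        have := land_pair a 0 c.1 1 (by omega) (by omega)
        simpa [emb1] using this
      rw [this]
      by_cases h : a &&& c.1 = a
      · rw [if_pos (by omega), if_pos h]
      · rw [if_neg (by omega), if_neg h]
    rw [hg]
    by_cases h : emb1 k c ∈ S
    · rw [if_pos h, if_pos (hmem.2 h)]
    · rw [if_neg h, if_neg (fun hc => h (hmem.1 hc))]

lemma phi_zg_odd (k : ℕ) (S : Finset (Fin (2^(k+1)))) (a : ℕ) :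
    phi F k (zg F (k+1) S (2*a+1)) = (0, zg F k (side1 k S) a) := by
  refine Prod.ext (funext fun c => ?_) (funext fun c => ?_)
  · show (if emb0 k c ∈ S then grow F (k+1) (2*a+1) (emb0 k c) else 0) = 0
    have hg : grow F (k+1) (2*a+1) (emb0 k c) = 0 := by
      unfold grow
      have : (2*a+1) &&& ((emb0 k c : Fin (2^(k+1))) : ℕ) = 2*(a &&& c.1) := by
        have := land_pair a 1 c.1 0 (by omega) (by omega)
        simpa [emb0] using this
      rw [this, if_neg (by omega)]
    rw [hg]; simp
  · show (if emb1 k c ∈ S then grow F (k+1) (2*a+1) (emb1 k c) else 0)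
      = if c ∈ side1 k S then grow F k a c else 0
    have hmem : c ∈ side1 k S ↔ emb1 k c ∈ S := by simp [side1]
    have hg : grow F (k+1) (2*a+1) (emb1 k c) = grow F k a c := by
      unfold grow
      have : (2*a+1) &&& ((emb1 k c : Fin (2^(k+1))) : ℕ) = 2*(a &&& c.1)+1 := by
        have := land_pair a 1 c.1 1 (by omega) (by omega)
        simpa [emb1] using this
      rw [this]
      by_cases h : a &&& c.1 = a
      · rw [if_pos (by omega), if_pos h]
      · rw [if_neg (by omega), if_neg h]
    rw [hg]
    by_cases h : emb1 k c ∈ S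
    · rw [if_pos h, if_pos (hmem.2 h)]
    · rw [if_neg h, if_neg (fun hc => h (hmem.1 hc))]

/-! ### Finrank of a product of submodules -/

lemma findim_prod {V W : Type*} [AddCommGroup V] [Module F V] [AddCommGroup W] [Module F W]
    (P : Submodule F V) (Q : Submodule F W) [FiniteDimensional F P] [FiniteDimensional F Q] :
    FiniteDimensional F (P.prod Q) := by
  rw [LinearMap.prod_eq_sup_map]
  infer_instance

lemma finrank_prod_submodule {V W : Type*} [AddCommGroup V] [Module F V] [AddCommGroup W]
    [Module F W] (P : Submodule F V) (Q : Submodule F W)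
    [FiniteDimensional F P] [FiniteDimensional F Q] :
    finrank F (P.prod Q) = finrank F P + finrank F Q := by
  have hinf : (P.map (LinearMap.inl F V W)) ⊓ (Q.map (LinearMap.inr F V W)) = ⊥ := by
    rw [eq_bot_iff]
    rintro ⟨x, y⟩ hxy
    rcases Submodule.mem_inf.1 hxy with ⟨h1, h2⟩
    rcases Submodule.mem_map.1 h1 with ⟨a, _, ha⟩
    rcases Submodule.mem_map.1 h2 with ⟨b, _, hb⟩
    rw [LinearMap.inl_apply] at ha
    rw [LinearMap.inr_apply] at hb
    have hx : x = 0 := ((Prod.ext_iff.1 hb).1).symm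
    have hy : y = 0 := ((Prod.ext_iff.1 ha).2).symm
    subst hx; subst hy
    simp
  have key := Submodule.finrank_sup_add_finrank_inf_eq
    (P.map (LinearMap.inl F V W)) (Q.map (LinearMap.inr F V W))
  rw [hinf, finrank_bot] at key
  have e1 : finrank F (P.map (LinearMap.inl F V W)) = finrank F P :=
    (LinearEquiv.finrank_eq (Submodule.equivMapOfInjective _ LinearMap.inl_injective P)).symm
  have e2 : finrank F (Q.map (LinearMap.inr F V W)) = finrank F Q :=
    (LinearEquiv.finrank_eq (Submodule.equivMapOfInjective _ LinearMap.inr_injective Q)).symm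
  rw [LinearMap.prod_eq_sup_map]
  omega

/-! ### Splitting the span of the first rows -/

lemma span_split_even (k : ℕ) (S : Finset (Fin (2^(k+1)))) (t : ℕ) :
    (spanTop F (k+1) (2*t) S).map (phi F k : (Fin (2^(k+1)) → F) →ₗ[F] _) =
      (spanTop F k t (side0 k S)).prod (spanTop F k t (side1 k S)) := by
  unfold spanTop
  rw [Submodule.map_span]
  apply le_antisymm
  · rw [Submodule.span_le]
    rintro _ ⟨_, ⟨a, ha, rfl⟩, rfl⟩
    simp only [Set.mem_Iio] at ha
    simp only [LinearEquiv.coe_coe]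
    by_cases hpar : a % 2 = 0
    · have h2 : a = 2 * (a / 2) := by omega
      rw [h2, phi_zg_even]
      exact Submodule.mem_prod.2 ⟨Submodule.subset_span ⟨a/2, Set.mem_Iio.2 (by omega), rfl⟩,
        Submodule.subset_span ⟨a/2, Set.mem_Iio.2 (by omega), rfl⟩⟩
    · have h2 : a = 2 * (a / 2) + 1 := by omega
      rw [h2, phi_zg_odd]
      exact Submodule.mem_prod.2 ⟨Submodule.zero_mem _,
        Submodule.subset_span ⟨a/2, Set.mem_Iio.2 (by omega), rfl⟩⟩
  · rw [← LinearMap.span_inl_union_inr, Submodule.span_le]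
    rintro _ (⟨_, ⟨a, ha, rfl⟩, rfl⟩ | ⟨_, ⟨a, ha, rfl⟩, rfl⟩)
    · simp only [Set.mem_Iio] at ha
      have heq : LinearMap.inl F (Fin (2^k) → F) (Fin (2^k) → F) (zg F k (side0 k S) a)
          = phi F k (zg F (k+1) S (2*a)) - phi F k (zg F (k+1) S (2*a+1)) := by
        rw [phi_zg_even, phi_zg_odd, LinearMap.inl_apply, Prod.mk_sub_mk, sub_zero, sub_self]
      rw [heq]
      refine Submodule.sub_mem _ (Submodule.subset_span ?_) (Submodule.subset_span ?_)
      · exact ⟨_, ⟨2*a, by simp; omega, rfl⟩, by simp only [LinearEquiv.coe_coe]⟩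
      · exact ⟨_, ⟨2*a+1, by simp; omega, rfl⟩, by simp only [LinearEquiv.coe_coe]⟩
    · simp only [Set.mem_Iio] at ha
      have heq : LinearMap.inr F (Fin (2^k) → F) (Fin (2^k) → F) (zg F k (side1 k S) a)
          = phi F k (zg F (k+1) S (2*a+1)) := by
        rw [phi_zg_odd, LinearMap.inr_apply]
      rw [heq]
      exact Submodule.subset_span ⟨_, ⟨2*a+1, by simp; omega, rfl⟩,
        by simp only [LinearEquiv.coe_coe]⟩

lemma rank_split_even (k : ℕ) (S : Finset (Fin (2^(k+1)))) (t : ℕ) :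
    finrank F (spanTop F (k+1) (2*t) S)
      = finrank F (spanTop F k t (side0 k S)) + finrank F (spanTop F k t (side1 k S)) := by
  rw [← LinearEquiv.finrank_map_eq (phi F k), span_split_even]
  haveI := findim_prod F (spanTop F k t (side0 k S)) (spanTop F k t (side1 k S))
  exact finrank_prod_submodule F _ _

lemma rank_split_odd (k : ℕ) (S : Finset (Fin (2^(k+1)))) (t : ℕ) :
    finrank F (spanTop F (k+1) (2*t+1) S)
      = finrank F (spanTop F k t (side0 k S)) + finrank F (spanTop F k t (side1 k S)) +
        (if zg F k (side0 k S) t ∈ spanTop F k t (side0 k S) ∧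
            zg F k (side1 k S) t ∈ spanTop F k t (side1 k S) then 0 else 1) := by
  have hIio : Set.Iio (2*t+1) = Set.Iio (2*t) ∪ {2*t} := by ext x; simp
  have hmap : (spanTop F (k+1) (2*t+1) S).map (phi F k : (Fin (2^(k+1)) → F) →ₗ[F] _) =
      ((spanTop F k t (side0 k S)).prod (spanTop F k t (side1 k S))) ⊔
        Submodule.span F {(zg F k (side0 k S) t, zg F k (side1 k S) t)} := by
    have h1 := span_split_even F k S t
    unfold spanTop at h1 ⊢
    rw [hIio, Set.image_union, Set.image_singleton, Submodule.span_union, Submodule.map_sup, h1,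
      Submodule.map_span, Set.image_singleton]
    have h2 : (⇑((phi F k : (Fin (2^(k+1)) → F) →ₗ[F] _))) (zg F (k+1) S (2*t))
        = (zg F k (side0 k S) t, zg F k (side1 k S) t) := by
      simp only [LinearEquiv.coe_coe]; exact phi_zg_even F k S t
    rw [h2]
  rw [← LinearEquiv.finrank_map_eq (phi F k), hmap]
  haveI := findim_prod F (spanTop F k t (side0 k S)) (spanTop F k t (side1 k S))
  rw [finrank_sup_singleton, finrank_prod_submodule, Submodule.mem_prod]
  by_cases hcond : zg F k (side0 k S) t ∈ spanTop F k t (side0 k S) ∧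
      zg F k (side1 k S) t ∈ spanTop F k t (side1 k S)
  · rw [if_pos hcond, if_pos hcond]
  · rw [if_neg hcond, if_neg hcond]

/-! ### The pairing bijection on subsets -/

def emb0e (k : ℕ) : Fin (2^k) ↪ Fin (2^(k+1)) :=
  ⟨emb0 k, fun a b h => Fin.ext (by
    have := congrArg Fin.val h; simp only [emb0] at this; omega)⟩

def emb1e (k : ℕ) : Fin (2^k) ↪ Fin (2^(k+1)) :=
  ⟨emb1 k, fun a b h => Fin.ext (by
    have := congrArg Fin.val h; simp only [emb1] at this; omega)⟩

noncomputable def psi (k : ℕ) (p : Finset (Fin (2^k)) × Finset (Fin (2^k))) :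
    Finset (Fin (2^(k+1))) :=
  p.1.map (emb0e k) ∪ p.2.map (emb1e k)

lemma mem_psi (k : ℕ) (p : Finset (Fin (2^k)) × Finset (Fin (2^k))) (j : Fin (2^(k+1))) :
    j ∈ psi k p ↔ (∃ c ∈ p.1, emb0 k c = j) ∨ (∃ c ∈ p.2, emb1 k c = j) := by
  simp [psi, Finset.mem_union, Finset.mem_map, emb0e, emb1e]
  exact Iff.rfl

lemma side0_psi (k : ℕ) (p : Finset (Fin (2^k)) × Finset (Fin (2^k))) :
    side0 k (psi k p) = p.1 := by
  ext c
  simp only [side0, Finset.mem_filter, Finset.mem_univ, true_and, mem_psi]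
  constructor
  · rintro (⟨c', hc', h⟩ | ⟨c', hc', h⟩)
    · have hv := congrArg Fin.val h; simp only [emb0] at hv
      have hcc : c' = c := Fin.ext (by omega)
      exact hcc ▸ hc'
    · exfalso; have hv := congrArg Fin.val h; simp only [emb0, emb1] at hv; omega
  · intro hc; exact Or.inl ⟨c, hc, rfl⟩

lemma side1_psi (k : ℕ) (p : Finset (Fin (2^k)) × Finset (Fin (2^k))) :
    side1 k (psi k p) = p.2 := by
  ext c
  simp only [side1, Finset.mem_filter, Finset.mem_univ, true_and, mem_psi]
  constructor
  · rintro (⟨c', hc', h⟩ | ⟨c', hc', h⟩)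
    · exfalso; have hv := congrArg Fin.val h; simp only [emb0, emb1] at hv; omega
    · have hv := congrArg Fin.val h; simp only [emb1] at hv
      have hcc : c' = c := Fin.ext (by omega)
      exact hcc ▸ hc'
  · intro hc; exact Or.inr ⟨c, hc, rfl⟩

lemma card_psi (k : ℕ) (p : Finset (Fin (2^k)) × Finset (Fin (2^k))) :
    (psi k p).card = p.1.card + p.2.card := by
  unfold psi
  rw [Finset.card_union_of_disjoint, Finset.card_map, Finset.card_map]
  rw [Finset.disjoint_left]
  rintro j hj1 hj2
  simp only [Finset.mem_map] at hj1 hj2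
  obtain ⟨a, _, ha⟩ := hj1
  obtain ⟨b, _, hb⟩ := hj2
  have h1 := congrArg Fin.val ha
  have h2 := congrArg Fin.val hb
  simp only [emb0e, emb1e, Function.Embedding.coeFn_mk, emb0, emb1] at h1 h2
  change 2 * a.1 = j.1 at h1
  change 2 * b.1 + 1 = j.1 at h2
  omega

lemma psi_bijective (k : ℕ) : Function.Bijective (psi k) := by
  constructor
  · intro p q h
    have h0 := congrArg (side0 k) h
    have h1 := congrArg (side1 k) h
    rw [side0_psi, side0_psi] at h0
    rw [side1_psi, side1_psi] at h1
    exact Prod.ext h0 h1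
  · intro S
    refine ⟨(side0 k S, side1 k S), ?_⟩
    ext j
    rw [mem_psi]
    constructor
    · rintro (⟨c, hc, rfl⟩ | ⟨c, hc, rfl⟩)
      · simpa [side0] using hc
      · simpa [side1] using hc
    · intro hj
      by_cases hpar : (j : ℕ) % 2 = 0
      · left
        have hlt : (j : ℕ)/2 < 2^k := by have := j.2; have := pow_succ_two k; omega
        have hj2 : emb0 k ⟨(j : ℕ)/2, hlt⟩ = j := Fin.ext (by simp only [emb0]; omega)
        refine ⟨⟨(j : ℕ)/2, hlt⟩, ?_, hj2⟩
        simp only [side0, Finset.mem_filter, Finset.mem_univ, true_and]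
        rw [hj2]; exact hj
      · right
        have hlt : (j : ℕ)/2 < 2^k := by have := j.2; have := pow_succ_two k; omega
        have hj2 : emb1 k ⟨(j : ℕ)/2, hlt⟩ = j := Fin.ext (by simp only [emb1]; omega)
        refine ⟨⟨(j : ℕ)/2, hlt⟩, ?_, hj2⟩
        simp only [side1, Finset.mem_filter, Finset.mem_univ, true_and]
        rw [hj2]; exact hj

lemma sum_split (k : ℕ) (f : Finset (Fin (2^(k+1))) → ℝ) :
    ∑ S : Finset (Fin (2^(k+1))), f S
      = ∑ p : Finset (Fin (2^k)) × Finset (Fin (2^k)), f (psi k p) :=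
  (Fintype.sum_bijective (psi k) (psi_bijective k) _ _ fun _ => rfl).symm

lemma sum_wt (n : ℕ) (s : ℝ) :
    ∑ S : Finset (Fin n), s ^ S.card * (1-s) ^ (n - S.card) = 1 := by
  calc ∑ S : Finset (Fin n), s ^ S.card * (1-s) ^ (n - S.card)
      = ∑ S : Finset (Fin n), (∏ _i ∈ S, s) * ∏ _i ∈ Finset.univ \ S, (1-s) := by
        apply Finset.sum_congr rfl
        intro S _
        rw [Finset.prod_const, Finset.prod_const, Finset.card_sdiff_of_subset (Finset.subset_univ S),
          Finset.card_univ, Fintype.card_fin]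
    _ = ∏ _i : Fin n, (s + (1-s)) := by
        rw [Finset.prod_add, Finset.powerset_univ]
    _ = 1 := by rw [Finset.prod_const]; norm_num

lemma wt_psi (k : ℕ) (s : ℝ) (p : Finset (Fin (2^k)) × Finset (Fin (2^k))) :
    wtF (2^(k+1)) s (psi k p) = wtF (2^k) s p.1 * wtF (2^k) s p.2 := by
  unfold wtF
  have hc := card_psi k p
  have h1 : p.1.card ≤ 2^k := by
    simpa using Finset.card_le_univ p.1
  have h2 : p.2.card ≤ 2^k := by
    simpa using Finset.card_le_univ p.2
  rw [hc, show 2^(k+1) - (p.1.card + p.2.card) = (2^k - p.1.card) + (2^k - p.2.card) from by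
    have := pow_succ_two k; omega, pow_add, pow_add]
  ring

/-! ### Expressing `rho` as a sum -/

lemma expRank_top (k i : ℕ) (hi : i ≤ 2^k) (s : ℝ) :
    expRank F (topRows F (Gmat F k) i) s
      = ∑ S : Finset (Fin (2^k)),
          wtF (2^k) s S * (finrank F (spanTop F k i S) : ℝ) := by
  unfold expRank wtF
  apply Finset.sum_congr rfl
  intro S _
  rw [rank_top_eq F k i hi S]

lemma rho_eq_sum_eps (k i : ℕ) (hi1 : 1 ≤ i) (hi : i ≤ 2^k) (s : ℝ) :
    rho F k i s = ∑ T : Finset (Fin (2^k)), wtF (2^k) s T * epsF F k i T := by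
  unfold epsF
  obtain ⟨t, rfl⟩ : ∃ t, i = t + 1 := ⟨i - 1, by omega⟩
  unfold rho
  rw [show t + 1 - 1 = t by omega]
  rw [expRank_top F k (t+1) hi s, expRank_top F k t (by omega) s, ← Finset.sum_sub_distrib]
  apply Finset.sum_congr rfl
  intro T _
  rw [finrank_spanTop_succ F k t T]
  by_cases h : zg F k T t ∈ spanTop F k t T
  · rw [if_pos h, if_pos h]; push_cast; ring
  · rw [if_neg h, if_neg h]; push_cast; ring

lemma rho_odd_sum (k i : ℕ) (hi1 : 1 ≤ i) (hi : i ≤ 2^k) (s : ℝ) :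
    rho F (k+1) (2*i-1) s = ∑ S : Finset (Fin (2^(k+1))),
      wtF (2^(k+1)) s S *
        (if (zg F k (side0 k S) (i-1) ∈ spanTop F k (i-1) (side0 k S) ∧
             zg F k (side1 k S) (i-1) ∈ spanTop F k (i-1) (side1 k S)) then 0 else 1) := by
  obtain ⟨t, rfl⟩ : ∃ t, i = t + 1 := ⟨i - 1, by omega⟩
  have h1 : 2*(t+1)-1 = 2*t+1 := by omega
  have hle1 : 2*t+1 ≤ 2^(k+1) := by have := pow_succ_two k; omega
  have hle2 : 2*t ≤ 2^(k+1) := by omega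
  unfold rho
  rw [h1, show 2*t+1-1 = 2*t by omega, show t + 1 - 1 = t by omega]
  rw [expRank_top F (k+1) (2*t+1) hle1 s, expRank_top F (k+1) (2*t) hle2 s,
    ← Finset.sum_sub_distrib]
  apply Finset.sum_congr rfl
  intro S _
  rw [rank_split_odd F k S t, rank_split_even F k S t]
  by_cases h : zg F k (side0 k S) t ∈ spanTop F k t (side0 k S) ∧
      zg F k (side1 k S) t ∈ spanTop F k t (side1 k S)
  · rw [if_pos h, if_pos h]; push_cast; ring
  · rw [if_neg h, if_neg h]; push_cast; ring

lemma sum_wtF (n : ℕ) (s : ℝ) : ∑ S : Finset (Fin n), wtF n s S = 1 := by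
  unfold wtF; exact sum_wt n s

lemma sum_key (m : ℕ) (w e : Finset (Fin m) → ℝ) :
    ∑ p : Finset (Fin m) × Finset (Fin m),
        (w p.1 * w p.2) * (e p.1 + e p.2 - e p.1 * e p.2)
      = (∑ T, w T * e T) * (∑ T, w T) + (∑ T, w T) * (∑ T, w T * e T)
        - (∑ T, w T * e T) * (∑ T, w T * e T) := by
  rw [Fintype.sum_prod_type]
  rw [Fintype.sum_mul_sum (fun T => w T * e T) w, Fintype.sum_mul_sum w (fun T => w T * e T),
    Fintype.sum_mul_sum (fun T => w T * e T) (fun T => w T * e T)]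
  rw [← Finset.sum_add_distrib, ← Finset.sum_sub_distrib]
  apply Finset.sum_congr rfl
  intro a _
  rw [← Finset.sum_add_distrib, ← Finset.sum_sub_distrib]
  apply Finset.sum_congr rfl
  intro b _
  dsimp only
  ring

lemma rho_odd_main (k i : ℕ) (hi1 : 1 ≤ i) (hi : i ≤ 2^k) (s : ℝ) :
    rho F (k+1) (2*i-1) s = 2 * rho F k i s - (rho F k i s)^2 := by
  rw [rho_odd_sum F k i hi1 hi s, rho_eq_sum_eps F k i hi1 hi s, sum_split k]
  have hpt : ∀ p ∈ (Finset.univ : Finset (Finset (Fin (2^k)) × Finset (Fin (2^k)))),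
      wtF (2^(k+1)) s (psi k p) *
        (if (zg F k (side0 k (psi k p)) (i-1) ∈ spanTop F k (i-1) (side0 k (psi k p)) ∧
             zg F k (side1 k (psi k p)) (i-1) ∈ spanTop F k (i-1) (side1 k (psi k p)))
          then 0 else 1)
      = (wtF (2^k) s p.1 * wtF (2^k) s p.2) *
          (epsF F k i p.1 + epsF F k i p.2 - epsF F k i p.1 * epsF F k i p.2) := by
    intro p _
    rw [side0_psi, side1_psi, wt_psi]
    by_cases h1 : zg F k p.1 (i-1) ∈ spanTop F k (i-1) p.1 <;>
      by_cases h2 : zg F k p.2 (i-1) ∈ spanTop F k (i-1) p.2 <;>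
      simp [epsF, h1, h2] <;> ring
  rw [Finset.sum_congr rfl hpt, sum_key (2^k) (wtF (2^k) s) (epsF F k i), sum_wtF (2^k) s]
  ring

end RhoOdd

/-- For a power of two `n = 2^k ≥ 4`, `1 ≤ i ≤ n/2` and `s ∈ [0,1]`, the
odd-indexed conditional rank satisfies
`ρ(n, 2i−1, s) = 2·ρ(n/2, i, s) − ρ(n/2, i, s)² = ℓ(ρ(n/2, i, s))` where `ℓ x = 2x − x²`. -/
theorem rho_odd (F : Type*) [Field F] (k : ℕ) (hk : 2 ≤ k) (i : ℕ) (hi1 : 1 ≤ i)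
    (hi2 : i ≤ 2 ^ (k - 1)) (s : ℝ) (hs : s ∈ Set.Icc (0 : ℝ) 1) :
    rho F k (2 * i - 1) s = 2 * rho F (k - 1) i s - (rho F (k - 1) i s) ^ 2 := by
  obtain ⟨k₀, rfl⟩ : ∃ k₀, k = k₀ + 1 := ⟨k - 1, by omega⟩
  rw [Nat.add_sub_cancel] at hi2 ⊢
  exact RhoOdd.rho_odd_main F k₀ i hi1 hi2 s
end

section
/- For every power of two n ≥ 4, every 1 ≤ i ≤ n/2, and every s ∈ [0,1], the even-indexed conditional rank satisfies ρ(n, 2i, s) = ρ(n/2, i, s)² = r(ρ(n/2, i, s)), where r(x) = x². -/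
open scoped Classical

namespace RhoEvenAux

open Submodule Module

/-! ### Arithmetic of bitwise `&&&` with the doubling map -/

lemma land_even (q j : ℕ) : (2 * q) &&& j = 2 * (q &&& (j / 2)) := by
  conv_lhs => rw [← Nat.bit_testBit_zero_shiftRight_one j]
  show Nat.bit false q &&& _ = _
  rw [Nat.land_bit]
  simp [Nat.bit_val, Nat.shiftRight_one]

lemma land_odd (q j : ℕ) : (2 * q + 1) &&& j = 2 * (q &&& (j / 2)) + (j % 2) := by
  conv_lhs => rw [← Nat.bit_testBit_zero_shiftRight_one j]
  show Nat.bit true q &&& _ = _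
  rw [Nat.land_bit]
  rcases Nat.mod_two_eq_zero_or_one j with h | h <;>
    simp [Nat.bit_val, Nat.shiftRight_one, Nat.testBit_zero, h]

variable (F : Type*) [Field F]

/-! ### Rows of the Sierpinski matrix and their spans -/

/-- Row `r` of the big Sierpinski pattern, as a vector in `Fin n → F`. -/
def grow (n : ℕ) (r : ℕ) : Fin n → F := fun j => if r &&& (j : ℕ) = r then 1 else 0

/-- The set of the first `i` rows. -/
def rowSet (n i : ℕ) : Set (Fin n → F) := grow F n '' Set.Iio i

/-- Restriction of a vector to the coordinates in a finite set `S`. -/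
def restr {n : ℕ} (S : Finset (Fin n)) : (Fin n → F) →ₗ[F] (↥S → F) :=
  LinearMap.funLeft F F (fun j : ↥S => (j : Fin n))

lemma rowSet_succ (n i : ℕ) : rowSet F n (i + 1) = insert (grow F n i) (rowSet F n i) := by
  unfold rowSet
  rw [show Set.Iio (i + 1) = insert i (Set.Iio i) by ext x; simp, Set.image_insert_eq]

lemma grow_mem_rowSet (n i r : ℕ) (h : r < i) : grow F n r ∈ rowSet F n i := ⟨r, h, rfl⟩

lemma rowSet_mono (n : ℕ) {i i' : ℕ} (h : i ≤ i') : rowSet F n i ⊆ rowSet F n i' :=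
  Set.image_mono (Set.Iio_subset_Iio h)

lemma finrank_span_insert {V : Type*} [AddCommGroup V] [Module F V] [FiniteDimensional F V]
    (s : Set V) (x : V) :
    finrank F (span F (insert x s)) =
      finrank F (span F s) + (if x ∈ span F s then 0 else 1) := by
  split_ifs with h
  · rw [Submodule.span_insert_eq_span h, add_zero]
  · rw [Submodule.span_insert]
    have hx : x ≠ 0 := fun h0 => h (h0 ▸ Submodule.zero_mem _)
    have h1 : finrank F (F ∙ x) = 1 := finrank_span_singleton hx
    have hinf : (F ∙ x) ⊓ span F s = ⊥ := by
      rw [eq_bot_iff]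
      rintro y ⟨hy1, hy2⟩
      rcases Submodule.mem_span_singleton.mp hy1 with ⟨c, rfl⟩
      rcases eq_or_ne c 0 with rfl | hc
      · simp
      · exact absurd (by simpa [smul_smul, inv_mul_cancel₀ hc] using
          Submodule.smul_mem _ c⁻¹ hy2) h
    have hs := Submodule.finrank_sup_add_finrank_inf_eq (F ∙ x) (span F s)
    rw [hinf, finrank_bot, add_zero, h1] at hs
    omega

lemma mem_span_image_restr {n : ℕ} (s : Set (Fin n → F)) (g : Fin n → F) (S : Finset (Fin n)) :
    restr F S g ∈ span F (restr F S '' s) ↔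
      ∃ z ∈ span F s, ∀ j ∈ S, z j = g j := by
  rw [← Submodule.map_span, Submodule.mem_map]
  constructor
  · rintro ⟨z, hz, he⟩
    exact ⟨z, hz, fun j hj => congrFun he ⟨j, hj⟩⟩
  · rintro ⟨z, hz, he⟩
    exact ⟨z, hz, funext fun j => he j j.2⟩

/-! ### The conditional rank as a probability of row independence -/

lemma rank_topRows (k i : ℕ) (hi : i ≤ 2 ^ k) (S : Finset (Fin (2 ^ k))) :
    ((topRows F (Gmat F k) i).submatrix id (fun j : S => (j : Fin (2 ^ k)))).rank =
      finrank F (span F (restr F S '' rowSet F (2 ^ k) i)) := by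
  rw [Matrix.rank_eq_finrank_span_row]
  have hset : Set.range ((topRows F (Gmat F k) i).submatrix id fun j : S => (j : Fin (2 ^ k)))
      = restr F S '' rowSet F (2 ^ k) i := by
    ext x
    constructor
    · rintro ⟨r, rfl⟩
      exact ⟨grow F (2 ^ k) r.val, ⟨r.val, by have := r.2; simp only [Set.mem_Iio]; omega, rfl⟩,
        rfl⟩
    · rintro ⟨y, ⟨r, hr, rfl⟩, rfl⟩
      exact ⟨⟨r, by simp only [Set.mem_Iio] at hr; omega⟩, rfl⟩
  exact congrArg (fun t => finrank F (span F t)) hset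

lemma rho_eq (k i : ℕ) (hi1 : 1 ≤ i) (hi2 : i ≤ 2 ^ k) (s : ℝ) :
    rho F k i s = ∑ S : Finset (Fin (2 ^ k)), s ^ S.card * (1 - s) ^ (2 ^ k - S.card) *
      (if ∃ z ∈ span F (rowSet F (2 ^ k) (i - 1)), ∀ j ∈ S, z j = grow F (2 ^ k) (i - 1) j
       then (0 : ℝ) else 1) := by
  obtain ⟨i', rfl⟩ : ∃ i', i = i' + 1 := ⟨i - 1, by omega⟩
  unfold rho expRank
  rw [← Finset.sum_sub_distrib]
  apply Finset.sum_congr rfl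
  intro S _
  rw [rank_topRows F k (i' + 1) hi2 S, rank_topRows F k (i' + 1 - 1) (by omega) S]
  have e : finrank F (span F (restr F S '' rowSet F (2 ^ k) (i' + 1 - 1)))
      = finrank F (span F (restr F S '' rowSet F (2 ^ k) i')) := rfl
  rw [e]
  rw [rowSet_succ, Set.image_insert_eq, finrank_span_insert]
  simp only [mem_span_image_restr]
  push_cast
  split_ifs <;> ring

/-! ### The doubling structure -/

def half {m : ℕ} (j : Fin (m * 2)) : Fin m := ⟨j.val / 2, by have := j.2; omega⟩

def emb0 {m : ℕ} (p : Fin m) : Fin (m * 2) := ⟨2 * p.val, by have := p.2; omega⟩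
def emb1 {m : ℕ} (p : Fin m) : Fin (m * 2) := ⟨2 * p.val + 1, by have := p.2; omega⟩

@[simp] lemma half_emb0 {m : ℕ} (p : Fin m) : half (emb0 p) = p := by
  apply Fin.ext; show 2 * p.val / 2 = p.val; omega
@[simp] lemma half_emb1 {m : ℕ} (p : Fin m) : half (emb1 p) = p := by
  apply Fin.ext; show (2 * p.val + 1) / 2 = p.val; omega

lemma emb0_of_even {m : ℕ} (j : Fin (m * 2)) (h : (j : ℕ) % 2 = 0) : emb0 (half j) = j := by
  apply Fin.ext; show 2 * ((j : ℕ) / 2) = (j : ℕ); omega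
lemma emb1_of_odd {m : ℕ} (j : Fin (m * 2)) (h : (j : ℕ) % 2 = 1) : emb1 (half j) = j := by
  apply Fin.ext; show 2 * ((j : ℕ) / 2) + 1 = (j : ℕ); omega

lemma emb0_inj {m : ℕ} : Function.Injective (emb0 (m := m)) := by
  intro a b h
  apply Fin.ext
  have : (emb0 a).val = (emb0 b).val := congrArg Fin.val h
  simp only [emb0] at this
  omega

lemma emb1_inj {m : ℕ} : Function.Injective (emb1 (m := m)) := by
  intro a b h
  apply Fin.ext
  have : (emb1 a).val = (emb1 b).val := congrArg Fin.val h
  simp only [emb1] at this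
  omega

lemma emb0_ne_emb1 {m : ℕ} (p q : Fin m) : emb0 p ≠ emb1 q := by
  intro h
  have : (emb0 p).val = (emb1 q).val := congrArg Fin.val h
  simp only [emb0, emb1] at this
  omega

lemma emb0_mod {m : ℕ} (p : Fin m) : ((emb0 p : Fin (m * 2)) : ℕ) % 2 = 0 := by
  show 2 * p.val % 2 = 0; omega
lemma emb1_mod {m : ℕ} (p : Fin m) : ((emb1 p : Fin (m * 2)) : ℕ) % 2 = 1 := by
  show (2 * p.val + 1) % 2 = 1; omega

def phi1 (m : ℕ) : (Fin m → F) →ₗ[F] (Fin (m * 2) → F) := LinearMap.funLeft F F half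

def phi2 (m : ℕ) : (Fin m → F) →ₗ[F] (Fin (m * 2) → F) where
  toFun x := fun j => if (j : ℕ) % 2 = 1 then x (half j) else 0
  map_add' x y := by funext j; by_cases h : (j : ℕ) % 2 = 1 <;> simp [h]
  map_smul' c x := by funext j; by_cases h : (j : ℕ) % 2 = 1 <;> simp [h]

@[simp] lemma phi1_apply (m : ℕ) (x : Fin m → F) (j : Fin (m * 2)) :
    phi1 F m x j = x (half j) := rfl

@[simp] lemma phi2_apply (m : ℕ) (x : Fin m → F) (j : Fin (m * 2)) :
    phi2 F m x j = if (j : ℕ) % 2 = 1 then x (half j) else 0 := rfl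

lemma grow_even (m q : ℕ) : grow F (m * 2) (2 * q) = phi1 F m (grow F m q) := by
  funext j
  have h : (2 * q) &&& (j : ℕ) = 2 * q ↔ q &&& ((j : ℕ) / 2) = q := by
    rw [land_even]; omega
  simp only [grow, phi1_apply, half, h]; congr

lemma grow_odd (m q : ℕ) : grow F (m * 2) (2 * q + 1) = phi2 F m (grow F m q) := by
  funext j
  simp only [grow, phi2_apply, half, land_odd]
  rcases Nat.mod_two_eq_zero_or_one (j : ℕ) with h | h
  · rw [h, if_neg (by omega), if_neg (by omega)]
  · rw [h, if_pos rfl]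
    have h2 : 2 * (q &&& ((j : ℕ) / 2)) + 1 = 2 * q + 1 ↔ q &&& ((j : ℕ) / 2) = q := by omega
    simp only [h2]; congr

lemma rowSet_split (m i : ℕ) (hi : 1 ≤ i) :
    rowSet F (m * 2) (2 * i - 1) =
      phi1 F m '' rowSet F m i ∪ phi2 F m '' rowSet F m (i - 1) := by
  ext x
  constructor
  · rintro ⟨r, hr, rfl⟩
    simp only [Set.mem_Iio] at hr
    rcases Nat.even_or_odd r with ⟨q, hq⟩ | ⟨q, hq⟩
    · left
      exact ⟨grow F m q, grow_mem_rowSet F m i q (by omega),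
        by rw [← grow_even, show 2*q = r by omega]⟩
    · right
      exact ⟨grow F m q, grow_mem_rowSet F m (i - 1) q (by omega),
        by rw [← grow_odd, show 2*q+1 = r by omega]⟩
  · rintro (⟨y, ⟨q, hq, rfl⟩, rfl⟩ | ⟨y, ⟨q, hq, rfl⟩, rfl⟩) <;> simp only [Set.mem_Iio] at hq
    · rw [← grow_even]; exact ⟨2 * q, by simp only [Set.mem_Iio]; omega, rfl⟩
    · rw [← grow_odd]; exact ⟨2 * q + 1, by simp only [Set.mem_Iio]; omega, rfl⟩

lemma span_split (m i : ℕ) (hi : 1 ≤ i) :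
    span F (rowSet F (m * 2) (2 * i - 1)) =
      (span F (rowSet F m i)).map (phi1 F m) ⊔ (span F (rowSet F m (i - 1))).map (phi2 F m) := by
  rw [rowSet_split F m i hi, Submodule.span_union, Submodule.map_span, Submodule.map_span]

/-! ### The subsets of even and odd kept columns -/

noncomputable def TX {m : ℕ} (S : Finset (Fin (m * 2))) : Finset (Fin m) :=
  Finset.univ.filter fun p => emb0 p ∈ S
noncomputable def TY {m : ℕ} (S : Finset (Fin (m * 2))) : Finset (Fin m) :=
  Finset.univ.filter fun p => emb1 p ∈ S

lemma mem_TX {m : ℕ} {S : Finset (Fin (m * 2))} {p : Fin m} : p ∈ TX S ↔ emb0 p ∈ S := by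
  simp [TX]
lemma mem_TY {m : ℕ} {S : Finset (Fin (m * 2))} {p : Fin m} : p ∈ TY S ↔ emb1 p ∈ S := by
  simp [TY]

/-! ### The key equivalence: dependence of the even-indexed row -/

lemma key (m i : ℕ) (hi : 1 ≤ i) (S : Finset (Fin (m * 2))) :
    (∃ z ∈ span F (rowSet F (m * 2) (2 * i - 1)), ∀ j ∈ S, z j = grow F (m * 2) (2 * i - 1) j)
      ↔ ((∃ z ∈ span F (rowSet F m (i - 1)), ∀ p ∈ TX S, z p = grow F m (i - 1) p) ∨
         (∃ z ∈ span F (rowSet F m (i - 1)), ∀ p ∈ TY S, z p = grow F m (i - 1) p)) := by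
  set g : Fin m → F := grow F m (i - 1) with hg
  have hrow : grow F (m * 2) (2 * i - 1) = phi2 F m g := by
    rw [hg, ← grow_odd, show 2 * (i - 1) + 1 = 2 * i - 1 by omega]
  have hUi : span F (rowSet F m i) = (F ∙ g) ⊔ span F (rowSet F m (i - 1)) := by
    have h1 : rowSet F m i = insert g (rowSet F m (i - 1)) := by
      have := rowSet_succ F m (i - 1)
      rw [show i - 1 + 1 = i by omega] at this
      rw [this, hg]
    rw [h1, Submodule.span_insert]
  rw [hrow]
  constructor
  · rintro ⟨z, hz, hcond⟩
    rw [span_split F m i hi] at hz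
    rcases Submodule.mem_sup.mp hz with ⟨z1, hz1, z2, hz2, rfl⟩
    rcases Submodule.mem_map.mp hz1 with ⟨u, hu, rfl⟩
    rcases Submodule.mem_map.mp hz2 with ⟨v, hv, rfl⟩
    rw [hUi] at hu
    rcases Submodule.mem_sup.mp hu with ⟨cg, hcg, u0, hu0, rfl⟩
    rcases Submodule.mem_span_singleton.mp hcg with ⟨c, rfl⟩
    have hX : ∀ p ∈ TX S, c * g p + u0 p = 0 := by
      intro p hp
      have h := hcond (emb0 p) (mem_TX.mp hp)
      simpa [phi1_apply, phi2_apply, emb0_mod p, half_emb0] using h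
    have hY : ∀ p ∈ TY S, c * g p + u0 p + v p = g p := by
      intro p hp
      have h := hcond (emb1 p) (mem_TY.mp hp)
      simpa [phi1_apply, phi2_apply, emb1_mod p, half_emb1] using h
    by_cases hc : c = 0
    · right
      refine ⟨u0 + v, Submodule.add_mem _ hu0 hv, fun p hp => ?_⟩
      have h := hY p hp
      rw [hc] at h
      simpa using h
    · left
      refine ⟨(-c⁻¹) • u0, Submodule.smul_mem _ _ hu0, fun p hp => ?_⟩
      have h := hX p hp
      have : (-c⁻¹) * u0 p = g p := by
        field_simp
        linear_combination -h
      simpa using this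
  · rintro (⟨z, hz, hcond⟩ | ⟨z, hz, hcond⟩)
    · refine ⟨phi1 F m (g - z) + phi2 F m z, ?_, ?_⟩
      · rw [span_split F m i hi]
        refine Submodule.mem_sup.mpr ⟨phi1 F m (g - z), Submodule.mem_map_of_mem ?_,
          phi2 F m z, Submodule.mem_map_of_mem hz, rfl⟩
        refine Submodule.sub_mem _ ?_ ?_
        · exact Submodule.subset_span (grow_mem_rowSet F m i (i - 1) (by omega))
        · exact Submodule.span_mono (rowSet_mono F m (by omega : i - 1 ≤ i)) hz
      · intro j hj
        rcases Nat.mod_two_eq_zero_or_one (j : ℕ) with h | h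
        · have hp : half j ∈ TX S := mem_TX.mpr (by rw [emb0_of_even j h]; exact hj)
          have := hcond (half j) hp
          simp [phi1_apply, phi2_apply, h, this]
        · simp [phi1_apply, phi2_apply, h]
    · refine ⟨phi2 F m z, ?_, ?_⟩
      · rw [span_split F m i hi]
        exact Submodule.mem_sup.mpr ⟨0, Submodule.zero_mem _, phi2 F m z,
          Submodule.mem_map_of_mem hz, (zero_add _)⟩
      · intro j hj
        rcases Nat.mod_two_eq_zero_or_one (j : ℕ) with h | h
        · simp [phi2_apply, h]
        · have hp : half j ∈ TY S := mem_TY.mpr (by rw [emb1_of_odd j h]; exact hj)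
          have := hcond (half j) hp
          simp [phi2_apply, h, this]

/-! ### The pairing bijection on subsets -/

noncomputable def pairS {m : ℕ} (T : Finset (Fin m) × Finset (Fin m)) : Finset (Fin (m * 2)) :=
  T.1.image emb0 ∪ T.2.image emb1

lemma TX_pairS {m : ℕ} (T : Finset (Fin m) × Finset (Fin m)) : TX (pairS T) = T.1 := by
  ext p
  simp only [mem_TX, pairS, Finset.mem_union, Finset.mem_image]
  constructor
  · rintro (⟨q, hq, he⟩ | ⟨q, hq, he⟩)
    · rwa [← emb0_inj he]
    · exact absurd he.symm (emb0_ne_emb1 p q)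
  · exact fun h => Or.inl ⟨p, h, rfl⟩

lemma TY_pairS {m : ℕ} (T : Finset (Fin m) × Finset (Fin m)) : TY (pairS T) = T.2 := by
  ext p
  simp only [mem_TY, pairS, Finset.mem_union, Finset.mem_image]
  constructor
  · rintro (⟨q, hq, he⟩ | ⟨q, hq, he⟩)
    · exact absurd he (emb0_ne_emb1 q p)
    · rwa [← emb1_inj he]
  · exact fun h => Or.inr ⟨p, h, rfl⟩

lemma pairS_TXY {m : ℕ} (S : Finset (Fin (m * 2))) : pairS (TX S, TY S) = S := by
  ext j
  simp only [pairS, Finset.mem_union, Finset.mem_image]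
  constructor
  · rintro (⟨q, hq, rfl⟩ | ⟨q, hq, rfl⟩)
    · exact mem_TX.mp hq
    · exact mem_TY.mp hq
  · intro hj
    rcases Nat.mod_two_eq_zero_or_one (j : ℕ) with h | h
    · refine Or.inl ⟨half j, ?_, ?_⟩
      · rw [mem_TX, emb0_of_even j h]; exact hj
      · exact emb0_of_even j h
    · refine Or.inr ⟨half j, ?_, ?_⟩
      · rw [mem_TY, emb1_of_odd j h]; exact hj
      · exact emb1_of_odd j h

lemma card_pairS {m : ℕ} (T : Finset (Fin m) × Finset (Fin m)) :
    (pairS T).card = T.1.card + T.2.card := by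
  rw [pairS, Finset.card_union_of_disjoint, Finset.card_image_of_injective _ emb0_inj,
    Finset.card_image_of_injective _ emb1_inj]
  rw [Finset.disjoint_left]
  rintro j hj1 hj2
  rcases Finset.mem_image.mp hj1 with ⟨p, _, rfl⟩
  rcases Finset.mem_image.mp hj2 with ⟨q, _, he⟩
  exact emb0_ne_emb1 p q he.symm

noncomputable def pairEquiv (m : ℕ) :
    (Finset (Fin m) × Finset (Fin m)) ≃ Finset (Fin (m * 2)) where
  toFun := pairS
  invFun S := (TX S, TY S)
  left_inv T := by ext1 <;> simp [TX_pairS, TY_pairS]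
  right_inv S := pairS_TXY S

lemma sum_pair (m : ℕ) (f : Finset (Fin (m * 2)) → ℝ) :
    ∑ S : Finset (Fin (m * 2)), f S =
      ∑ T : Finset (Fin m) × Finset (Fin m), f (pairS T) :=
  (Equiv.sum_comp (pairEquiv m) f).symm

lemma ite_or_mul (A B : Prop) :
    (if A ∨ B then (0 : ℝ) else 1) = (if A then (0 : ℝ) else 1) * (if B then (0 : ℝ) else 1) := by
  by_cases hA : A <;> by_cases hB : B <;> simp [hA, hB]

end RhoEvenAux

/-- For a power of two `n = 2^k ≥ 4`, `1 ≤ i ≤ n/2` and `s ∈ [0,1]`, the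
even-indexed conditional rank satisfies `ρ(n, 2i, s) = ρ(n/2, i, s)² = r(ρ(n/2, i, s))`
where `r x = x²`. -/
theorem rho_even (F : Type*) [Field F] (k : ℕ) (hk : 2 ≤ k) (i : ℕ) (hi1 : 1 ≤ i)
    (hi2 : i ≤ 2 ^ (k - 1)) (s : ℝ) (hs : s ∈ Set.Icc (0 : ℝ) 1) :
    rho F k (2 * i) s = (rho F (k - 1) i s) ^ 2 := by
  open RhoEvenAux Submodule Module in
  obtain ⟨k', rfl⟩ : ∃ k', k = k' + 1 := ⟨k - 1, by omega⟩
  have hi2' : i ≤ 2 ^ k' := by simpa using hi2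
  rw [rho_eq F (k' + 1) (2 * i) (by omega) (by rw [pow_succ]; omega) s,
    show k' + 1 - 1 = k' from rfl, rho_eq F k' i hi1 hi2' s]
  have main : (∑ S : Finset (Fin (2 ^ k' * 2)),
        s ^ S.card * (1 - s) ^ (2 ^ k' * 2 - S.card) *
        (if ∃ z ∈ span F (rowSet F (2 ^ k' * 2) (2 * i - 1)),
            ∀ j ∈ S, z j = grow F (2 ^ k' * 2) (2 * i - 1) j then (0 : ℝ) else 1))
      = (∑ T : Finset (Fin (2 ^ k')),
        s ^ T.card * (1 - s) ^ (2 ^ k' - T.card) *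
        (if ∃ z ∈ span F (rowSet F (2 ^ k') (i - 1)),
            ∀ p ∈ T, z p = grow F (2 ^ k') (i - 1) p then (0 : ℝ) else 1)) ^ 2 := by
    set m := 2 ^ k' with hm
    set f : Finset (Fin m) → ℝ := fun T => s ^ T.card * (1 - s) ^ (m - T.card) *
        (if ∃ z ∈ span F (rowSet F m (i - 1)),
            ∀ p ∈ T, z p = grow F m (i - 1) p then (0 : ℝ) else 1) with hf
    rw [sum_pair]
    have hTT : ∀ T : Finset (Fin m) × Finset (Fin m),
        s ^ (pairS T).card * (1 - s) ^ (m * 2 - (pairS T).card) *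
          (if ∃ z ∈ span F (rowSet F (m * 2) (2 * i - 1)),
              ∀ j ∈ pairS T, z j = grow F (m * 2) (2 * i - 1) j then (0 : ℝ) else 1)
        = f T.1 * f T.2 := by
      intro T
      have h1 : T.1.card ≤ m := by
        simpa using Finset.card_le_univ T.1
      have h2 : T.2.card ≤ m := by
        simpa using Finset.card_le_univ T.2
      rw [card_pairS T]
      simp only [key F m i hi1 (pairS T), TX_pairS, TY_pairS]
      rw [ite_or_mul, show m * 2 - (T.1.card + T.2.card) = (m - T.1.card) + (m - T.2.card)
        by omega, pow_add, pow_add, hf]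
      ring
    rw [Finset.sum_congr rfl (fun T _ => hTT T), sq, Fintype.sum_mul_sum,
      Fintype.sum_prod_type]
  exact main
end

section
/- The conditional ranks of G_n do not depend on the underlying field: for any two fields F and F', any power of two n, any 1 ≤ i ≤ n and any s ∈ [0,1], the value ρ(n,i,s) computed with ranks over F equals the value ρ(n,i,s) computed with ranks over F'. -/
open scoped Classical

section NatBits

lemma and_mod_two_pow {b c k : ℕ} (hb : b < 2 ^ k) : b &&& (c % 2 ^ k) = b &&& c := by
  apply Nat.eq_of_testBit_eq
  intro i
  simp only [Nat.testBit_and, Nat.testBit_mod_two_pow]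
  by_cases h : i < k
  · simp [h]
  · have : b.testBit i = false := Nat.testBit_lt_two_pow (lt_of_lt_of_le hb (Nat.pow_le_pow_right (by norm_num) (le_of_not_gt h)))
    simp [this]

lemma two_pow_add_and_two_pow_add {a c k : ℕ} (ha : a < 2 ^ k) (hc : c < 2 ^ k) :
    (2 ^ k + a) &&& (2 ^ k + c) = 2 ^ k + (a &&& c) := by
  apply Nat.eq_of_testBit_eq
  intro i
  rcases lt_trichotomy i k with h | rfl | h
  · simp [Nat.testBit_and, Nat.testBit_two_pow_add_gt h]
  · have hac : a &&& c < 2 ^ i := lt_of_le_of_lt (Nat.and_le_left) ha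
    simp [Nat.testBit_and, Nat.testBit_two_pow_add_eq,
      Nat.testBit_lt_two_pow ha, Nat.testBit_lt_two_pow hc, Nat.testBit_lt_two_pow hac]
  · have h2 : ∀ x : ℕ, x < 2 ^ k → 2 ^ k + x < 2 ^ i := by
      intro x hx
      calc 2 ^ k + x < 2 ^ k + 2 ^ k := by omega
      _ = 2 ^ (k + 1) := by ring
      _ ≤ 2 ^ i := Nat.pow_le_pow_right (by norm_num) h
    have hac : a &&& c < 2 ^ k := lt_of_le_of_lt (Nat.and_le_left) ha
    simp [Nat.testBit_and, Nat.testBit_lt_two_pow (h2 a ha), Nat.testBit_lt_two_pow (h2 c hc),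
      Nat.testBit_lt_two_pow (h2 _ hac)]

lemma and_le_right' {a b : ℕ} (h : a &&& b = a) : a ≤ b := h ▸ Nat.and_le_right

end NatBits


section Cols

variable (F : Type*) [Field F]

/-- Column `c` of the first-`m`-rows Sierpinski matrix, as a vector. -/
def Vcol (m : ℕ) (c : ℕ) : Fin m → F := fun b => if (b : ℕ) &&& c = (b : ℕ) then 1 else 0

variable {F}

lemma Vcol_mod {m k : ℕ} (hm : m ≤ 2 ^ k) (c : ℕ) : Vcol F m (c % 2 ^ k) = Vcol F m c := by
  funext b
  have hb : (b : ℕ) < 2 ^ k := lt_of_lt_of_le b.2 hm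
  simp only [Vcol, and_mod_two_pow hb]

/-- `dd F m S` : the dimension of the span of the columns indexed by `S`. -/
noncomputable def dd (F : Type*) [Field F] (m : ℕ) (S : Finset ℕ) : ℕ :=
  Module.finrank F (Submodule.span F (Vcol F m '' ↑S))

lemma dd_image_mod {m k : ℕ} (hm : m ≤ 2 ^ k) (S : Finset ℕ) :
    dd F m (S.image (· % 2 ^ k)) = dd F m S := by
  have hset : Vcol F m '' ↑(S.image (· % 2 ^ k)) = Vcol F m '' ↑S := by
    rw [Finset.coe_image, ← Set.image_comp]
    apply Set.image_congr
    intro c _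
    exact Vcol_mod hm c
  rw [dd, dd, hset]

/-- The columns of the full `2^k × 2^k` Sierpinski matrix are linearly independent. -/
lemma vcol_li (k : ℕ) : LinearIndependent F (fun t : Fin (2 ^ k) => Vcol F (2 ^ k) (t : ℕ)) := by
  have h : (fun t : Fin (2 ^ k) => Vcol F (2 ^ k) (t : ℕ)) = fun t => (Gmat F k).transpose t := by
    funext t b
    simp [Vcol, Gmat, Matrix.transpose_apply]
  rw [h]
  rw [show (fun t => (Gmat F k).transpose t) = (Gmat F k).col from rfl, Matrix.linearIndependent_cols_iff_isUnit]
  apply Matrix.isUnit_iff_isUnit_det _ |>.mpr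
  have htri : (Gmat F k).BlockTriangular id := by
    intro b c h
    simp only [id] at h
    simp only [Gmat, ite_eq_right_iff]
    intro hand
    exact absurd (Fin.lt_iff_val_lt_val.mp h) (not_lt.mpr (and_le_right' hand))
  have hdet : (Gmat F k).det = 1 := by
    rw [Matrix.det_of_upperTriangular htri]
    apply Finset.prod_eq_one
    intro b _
    simp [Gmat, Nat.and_self]
  rw [hdet]; exact isUnit_one

end Cols

section Sigma

variable (F : Type*) [Field F]

/-- Extension by zero into the last `j` coordinates. -/
def sigmaMap (n j : ℕ) : (Fin j → F) →ₗ[F] (Fin (n + j) → F) where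
  toFun g := Fin.append (fun _ => (0 : F)) g
  map_add' g h := by
    funext b
    induction b using Fin.addCases with
    | left b => simp [Fin.append_left]
    | right b => simp [Fin.append_right]
  map_smul' a g := by
    funext b
    induction b using Fin.addCases with
    | left b => simp [Fin.append_left]
    | right b => simp [Fin.append_right]

variable {F}

lemma sigmaMap_injective (n j : ℕ) : Function.Injective (sigmaMap F n j) := by
  intro g h hgh
  funext b
  have := congrFun hgh (Fin.natAdd n b)
  simpa only [sigmaMap, LinearMap.coe_mk, AddHom.coe_mk, Fin.append_right] using this

lemma sigmaMap_castAdd {n j : ℕ} (g : Fin j → F) (b : Fin n) :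
    sigmaMap F n j g (Fin.castAdd j b) = 0 := by
  simp only [sigmaMap, LinearMap.coe_mk, AddHom.coe_mk, Fin.append_left]

lemma sigma_vcol {k j : ℕ} (hj : j ≤ 2 ^ k) {t : ℕ} (ht : t < 2 ^ k) :
    sigmaMap F (2 ^ k) j (Vcol F j t) =
      Vcol F (2 ^ k + j) (t + 2 ^ k) - Vcol F (2 ^ k + j) t := by
  funext b
  induction b using Fin.addCases with
  | left b =>
    have hb : (b : ℕ) < 2 ^ k := b.2
    have hcoe : ((Fin.castAdd j b : Fin (2 ^ k + j)) : ℕ) = (b : ℕ) := rfl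
    have hand : (b : ℕ) &&& (t + 2 ^ k) = (b : ℕ) &&& t := by
      rw [← and_mod_two_pow hb (c := t + 2 ^ k), Nat.add_mod_right, Nat.mod_eq_of_lt ht]
    simp only [sigmaMap_castAdd, Pi.sub_apply, Vcol, hcoe, hand, sub_self]
  | right b =>
    have hb : (b : ℕ) < 2 ^ k := lt_of_lt_of_le b.2 hj
    have hcoe : ((Fin.natAdd (2 ^ k) b : Fin (2 ^ k + j)) : ℕ) = 2 ^ k + (b : ℕ) := rfl
    have h1 : (2 ^ k + (b : ℕ)) &&& (t + 2 ^ k) = 2 ^ k + ((b : ℕ) &&& t) := by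
      rw [Nat.add_comm t (2 ^ k), two_pow_add_and_two_pow_add hb ht]
    have h2 : ¬ ((2 ^ k + (b : ℕ)) &&& t = 2 ^ k + (b : ℕ)) := by
      intro h
      have := and_le_right' h
      omega
    have hswitch : (2 ^ k + (b : ℕ)) &&& (t + 2 ^ k) = 2 ^ k + (b : ℕ) ↔ (b : ℕ) &&& t = (b : ℕ) := by
      rw [h1]
      omega
    simp only [sigmaMap, LinearMap.coe_mk, AddHom.coe_mk, Fin.append_right, Pi.sub_apply, Vcol,
      hcoe, if_neg h2, sub_zero]
    by_cases hcond : (b : ℕ) &&& t = (b : ℕ)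
    · rw [if_pos hcond, if_pos (hswitch.mpr hcond)]
    · rw [if_neg hcond, if_neg (fun h => hcond (hswitch.mp h))]

end Sigma

section Split

variable {F : Type*} [Field F]

lemma dd_split (k j : ℕ) (hj : j ≤ 2 ^ k) (S : Finset ℕ)
    (hS : S ⊆ Finset.range (2 ^ (k + 1))) :
    dd F (2 ^ k + j) S =
      (S.image (· % 2 ^ k)).card +
        dd F j ((S.image (· % 2 ^ k)).filter (fun t => t ∈ S ∧ t + 2 ^ k ∈ S)) := by
  have hnpos : 0 < 2 ^ k := Nat.two_pow_pos k
  set U : Finset ℕ := S.image (· % 2 ^ k) with hU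
  set T : Finset ℕ := U.filter (fun t => t ∈ S ∧ t + 2 ^ k ∈ S) with hT
  have hUlt : ∀ t ∈ U, t < 2 ^ k := by
    intro t ht
    rw [hU] at ht
    obtain ⟨c, _, rfl⟩ := Finset.mem_image.mp ht
    exact Nat.mod_lt _ hnpos
  have hSlt : ∀ c ∈ S, c < 2 ^ k + 2 ^ k := by
    intro c hc
    have h1 := Finset.mem_range.mp (hS hc)
    have h2 : (2 : ℕ) ^ (k + 1) = 2 ^ k + 2 ^ k := by ring
    omega
  have hmod2 : ∀ c, 2 ^ k ≤ c → c < 2 ^ k + 2 ^ k → c % 2 ^ k = c - 2 ^ k := by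
    intro c h1 h2
    rw [Nat.mod_eq_sub_mod h1, Nat.mod_eq_of_lt (by omega)]
  set r : ℕ → ℕ := fun t => if t ∈ S then t else t + 2 ^ k with hr
  have hrS : ∀ t ∈ U, r t ∈ S := by
    intro t ht
    by_cases h : t ∈ S
    · simpa [hr, h] using h
    · rw [hU] at ht
      obtain ⟨c, hc, hct⟩ := Finset.mem_image.mp ht
      have hclt := hSlt c hc
      have hcn : 2 ^ k ≤ c := by
        by_contra hlt
        push_neg at hlt
        rw [Nat.mod_eq_of_lt hlt] at hct
        exact h (hct ▸ hc)
      have hceq : t + 2 ^ k = c := by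
        rw [← hct, hmod2 c hcn hclt]
        omega
      simp only [hr, if_neg h]
      rw [hceq]
      exact hc
  have hVr : ∀ t, t < 2 ^ k → Vcol F (2 ^ k) (r t) = Vcol F (2 ^ k) t := by
    intro t ht
    simp only [hr]
    by_cases h : t ∈ S
    · simp [h]
    · simp only [if_neg h]
      rw [← Vcol_mod (le_refl (2 ^ k)) (t + 2 ^ k), Nat.add_mod_right, Nat.mod_eq_of_lt ht]
  set fam1 : ↥U → (Fin (2 ^ k + j) → F) := fun t => Vcol F (2 ^ k + j) (r ↑t) with hfam1
  set famU : ↥U → (Fin (2 ^ k) → F) := fun t => Vcol F (2 ^ k) (r ↑t) with hfamU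
  set W1 : Submodule F (Fin (2 ^ k + j) → F) := Submodule.span F (Set.range fam1) with hW1
  set W2 : Submodule F (Fin (2 ^ k + j) → F) :=
    Submodule.map (sigmaMap F (2 ^ k) j) (Submodule.span F (Vcol F j '' ↑T)) with hW2
  have hTlt : ∀ t ∈ T, t < 2 ^ k := fun t ht => hUlt t (Finset.mem_of_mem_filter t ht)
  have hW2span : W2 = Submodule.span F
      ((fun t => Vcol F (2 ^ k + j) (t + 2 ^ k) - Vcol F (2 ^ k + j) t) '' ↑T) := by
    rw [hW2, Submodule.map_span, ← Set.image_comp]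
    congr 1
    apply Set.image_congr
    intro t ht
    exact sigma_vcol hj (hTlt t (Finset.mem_coe.mp ht))
  set π : (Fin (2 ^ k + j) → F) →ₗ[F] (Fin (2 ^ k) → F) :=
    LinearMap.funLeft F F (Fin.castAdd j) with hπdef
  have hπ : ∀ c, π (Vcol F (2 ^ k + j) c) = Vcol F (2 ^ k) c := fun c => rfl
  have hπσ : ∀ g : Fin j → F, π (sigmaMap F (2 ^ k) j g) = 0 := by
    intro g
    funext b
    have h1 : π (sigmaMap F (2 ^ k) j g) b = sigmaMap F (2 ^ k) j g (Fin.castAdd j b) := rfl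
    rw [h1, sigmaMap_castAdd]
    rfl
  have hfamU_li : LinearIndependent F famU := by
    have h0 := vcol_li (F := F) k
    have hinj : Function.Injective (fun t : ↥U => (⟨(t : ℕ), hUlt _ t.2⟩ : Fin (2 ^ k))) := by
      intro a b hab
      exact Subtype.ext (congrArg Fin.val hab)
    have hcomp := h0.comp _ hinj
    have heq : famU =
        (fun t : Fin (2 ^ k) => Vcol F (2 ^ k) (t : ℕ)) ∘
          (fun t : ↥U => (⟨(t : ℕ), hUlt _ t.2⟩ : Fin (2 ^ k))) := by
      funext t
      simp only [hfamU, Function.comp]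
      exact hVr _ (hUlt _ t.2)
    rw [heq]
    exact hcomp
  have hπfam : π ∘ fam1 = famU := by
    funext t
    exact hπ _
  have hfam1_li : LinearIndependent F fam1 := by
    apply LinearIndependent.of_comp π
    rw [hπfam]
    exact hfamU_li
  have hd1 : Module.finrank F ↥W1 = U.card := by
    rw [hW1, finrank_span_eq_card hfam1_li, Fintype.card_coe]
  have hd2 : Module.finrank F ↥W2 = dd F j T := by
    rw [hW2, dd]
    exact (LinearEquiv.finrank_eq
      (Submodule.equivMapOfInjective _ (sigmaMap_injective (2 ^ k) j) _)).symm
  have hdisj : W1 ⊓ W2 = ⊥ := by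
    rw [Submodule.eq_bot_iff]
    intro x hx
    obtain ⟨hx1, hx2⟩ := Submodule.mem_inf.mp hx
    rw [hW2] at hx2
    obtain ⟨g, hg, rfl⟩ := Submodule.mem_map.mp hx2
    have hker : π (sigmaMap F (2 ^ k) j g) = 0 := hπσ g
    rw [hW1] at hx1
    obtain ⟨c, hc⟩ := (Submodule.mem_span_range_iff_exists_fun F).mp hx1
    have hsum : ∑ t : ↥U, c t • famU t = 0 := by
      have h1 : ∑ t : ↥U, c t • famU t = π (∑ t : ↥U, c t • fam1 t) := by
        rw [map_sum]
        apply Finset.sum_congr rfl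
        intro t _
        rw [map_smul]
        rw [← hπfam]
        rfl
      rw [h1, hc, hker]
    have hc0 : ∀ t, c t = 0 := Fintype.linearIndependent_iff.mp hfamU_li c hsum
    rw [← hc]
    simp [hc0]
  have hW : Submodule.span F (Vcol F (2 ^ k + j) '' ↑S) = W1 ⊔ W2 := by
    apply le_antisymm
    · rw [Submodule.span_le]
      rintro x ⟨c, hc, rfl⟩
      have hcS : c ∈ S := hc
      have htU : c % 2 ^ k ∈ U := by
        rw [hU]
        exact Finset.mem_image_of_mem _ hcS
      by_cases h : c < 2 ^ k
      · have ht : c % 2 ^ k = c := Nat.mod_eq_of_lt h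
        have hx : Vcol F (2 ^ k + j) c = fam1 ⟨c % 2 ^ k, htU⟩ := by
          simp only [hfam1, hr, ht, if_pos hcS]
        rw [hx]
        exact Submodule.mem_sup_left (Submodule.subset_span (Set.mem_range_self _))
      · push_neg at h
        have hclt := hSlt c hcS
        have hceq : c = c % 2 ^ k + 2 ^ k := by
          rw [hmod2 c h hclt]
          omega
        by_cases h2 : c % 2 ^ k ∈ S
        · have htT : c % 2 ^ k ∈ T := by
            rw [hT]
            exact Finset.mem_filter.mpr ⟨htU, h2, by rw [← hceq]; exact hcS⟩
          have hx : Vcol F (2 ^ k + j) c =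
              fam1 ⟨c % 2 ^ k, htU⟩ +
                (Vcol F (2 ^ k + j) (c % 2 ^ k + 2 ^ k) - Vcol F (2 ^ k + j) (c % 2 ^ k)) := by
            have hft : fam1 ⟨c % 2 ^ k, htU⟩ = Vcol F (2 ^ k + j) (c % 2 ^ k) := by
              simp only [hfam1, hr, if_pos h2]
            have hab : ∀ x y : Fin (2 ^ k + j) → F, x + (y - x) = y := fun x y => by abel
            rw [hft, hab]
            exact congrArg _ hceq
          rw [hx]
          refine Submodule.add_mem _
            (Submodule.mem_sup_left (Submodule.subset_span (Set.mem_range_self _)))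
            (Submodule.mem_sup_right ?_)
          rw [hW2span]
          exact Submodule.subset_span (Set.mem_image_of_mem _ htT)
        · have hx : Vcol F (2 ^ k + j) c = fam1 ⟨c % 2 ^ k, htU⟩ := by
            simp only [hfam1, hr, if_neg h2]
            rw [← hceq]
          rw [hx]
          exact Submodule.mem_sup_left (Submodule.subset_span (Set.mem_range_self _))
    · apply sup_le
      · rw [hW1, Submodule.span_le]
        rintro x ⟨t, rfl⟩
        exact Submodule.subset_span (Set.mem_image_of_mem _ (hrS _ t.2))
      · rw [hW2span, Submodule.span_le]
        rintro x ⟨t, ht, rfl⟩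
        obtain ⟨_, h1, h2⟩ := Finset.mem_filter.mp (Finset.mem_coe.mp ht)
        exact Submodule.sub_mem _ (Submodule.subset_span (Set.mem_image_of_mem _ h2))
          (Submodule.subset_span (Set.mem_image_of_mem _ h1))
  have hfin := Submodule.finrank_sup_add_finrank_inf_eq W1 W2
  rw [hdisj, finrank_bot, add_zero, hd1, hd2] at hfin
  rw [dd, hW]
  exact hfin

end Split

section Main

lemma dd_zero_rows (G : Type*) [Field G] (S : Finset ℕ) : dd G 0 S = 0 := by
  have h1 : dd G 0 S ≤ Module.finrank G (Fin 0 → G) := Submodule.finrank_le _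
  have h2 : Module.finrank G (Fin 0 → G) = 0 := by
    rw [Module.finrank_pi]
    simp
  omega

lemma dd_empty (G : Type*) [Field G] (m : ℕ) : dd G m (∅ : Finset ℕ) = 0 := by
  simp [dd]

lemma dd_one (G : Type*) [Field G] : dd G 1 ({0} : Finset ℕ) = 1 := by
  have himg : Vcol G 1 '' ↑({0} : Finset ℕ) = {Vcol G 1 0} := by simp
  rw [dd, himg, finrank_span_singleton]
  intro hzero
  have := congrFun hzero 0
  simp [Vcol] at this

lemma dd_field_indep (F F' : Type*) [Field F] [Field F'] :
    ∀ k m (S : Finset ℕ), m ≤ 2 ^ k → S ⊆ Finset.range (2 ^ k) → dd F m S = dd F' m S := by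
  intro k
  induction k with
  | zero =>
    intro m S hm hS
    have hm1 : m ≤ 1 := by simpa using hm
    have hS0 : S ⊆ {0} := by simpa [Finset.range_one] using hS
    interval_cases m
    · rw [dd_zero_rows, dd_zero_rows]
    · rcases Finset.subset_singleton_iff.mp hS0 with rfl | rfl
      · rw [dd_empty, dd_empty]
      · rw [dd_one, dd_one]
  | succ k ih =>
    intro m S hm hS
    by_cases h : m ≤ 2 ^ k
    · rw [← dd_image_mod h S, ← dd_image_mod (F := F') h S]
      apply ih _ _ h
      intro t ht
      obtain ⟨c, _, rfl⟩ := Finset.mem_image.mp ht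
      exact Finset.mem_range.mpr (Nat.mod_lt _ (Nat.two_pow_pos k))
    · push_neg at h
      obtain ⟨j, rfl, hj⟩ : ∃ j, m = 2 ^ k + j ∧ j ≤ 2 ^ k := by
        refine ⟨m - 2 ^ k, ?_, ?_⟩ <;>
        · have h2 : (2 : ℕ) ^ (k + 1) = 2 ^ k + 2 ^ k := by ring
          omega
      rw [dd_split (F := F) k j hj S hS, dd_split (F := F') k j hj S hS]
      congr 1
      apply ih _ _ hj
      intro t ht
      have ht2 := Finset.mem_of_mem_filter t ht
      obtain ⟨c, _, rfl⟩ := Finset.mem_image.mp ht2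
      exact Finset.mem_range.mpr (Nat.mod_lt _ (Nat.two_pow_pos k))

end Main

section Assemble

open Matrix

lemma topRows_rank_eq_dd (F : Type*) [Field F] (k i : ℕ) (S : Finset (Fin (2 ^ k))) :
    ((topRows F (Gmat F k) i).submatrix id (fun j : S => (j : Fin (2 ^ k)))).rank
      = dd F (min i (2 ^ k)) (S.image (fun c : Fin (2 ^ k) => (c : ℕ))) := by
  rw [Matrix.rank_eq_finrank_span_cols, dd]
  have hcol : ∀ jj : ↥S,
      ((topRows F (Gmat F k) i).submatrix id (fun j : S => (j : Fin (2 ^ k))))ᵀ jj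
        = Vcol F (min i (2 ^ k)) (((jj : Fin (2 ^ k)) : ℕ)) := fun jj => rfl
  have hset : Set.range ((topRows F (Gmat F k) i).submatrix id (fun j : S => (j : Fin (2 ^ k))))ᵀ
      = Vcol F (min i (2 ^ k)) '' ↑(S.image (fun c : Fin (2 ^ k) => (c : ℕ))) := by
    ext v
    simp only [Set.mem_range, Finset.coe_image, Set.mem_image, Finset.mem_coe]
    constructor
    · rintro ⟨jj, rfl⟩
      exact ⟨((jj : Fin (2 ^ k)) : ℕ), ⟨(jj : Fin (2 ^ k)), jj.2, rfl⟩, (hcol jj).symm⟩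
    · rintro ⟨c, ⟨cf, hcf, rfl⟩, rfl⟩
      exact ⟨⟨cf, hcf⟩, hcol ⟨cf, hcf⟩⟩
  rw [← hset]; rfl

lemma expRank_field_indep (F F' : Type*) [Field F] [Field F'] (k i : ℕ) (s : ℝ) :
    expRank F (topRows F (Gmat F k) i) s = expRank F' (topRows F' (Gmat F' k) i) s := by
  unfold expRank
  apply Finset.sum_congr rfl
  intro S _
  congr 1
  rw [topRows_rank_eq_dd F k i S, topRows_rank_eq_dd F' k i S]
  norm_cast
  apply dd_field_indep F F' k
  · exact min_le_right _ _
  · intro t ht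
    obtain ⟨c, _, rfl⟩ := Finset.mem_image.mp ht
    exact Finset.mem_range.mpr c.2

end Assemble


/-- The conditional ranks of `G_n` do not depend on the underlying field:
for any two fields `F`, `F'`, any power of two `n = 2^k`, any `1 ≤ i ≤ n` and any
`s ∈ [0,1]`, `ρ(n,i,s)` computed over `F` equals `ρ(n,i,s)` computed over `F'`. -/
theorem rho_field_independent (F F' : Type*) [Field F] [Field F'] (k i : ℕ) (hi1 : 1 ≤ i)
    (hi2 : i ≤ 2 ^ k) (s : ℝ) (hs : s ∈ Set.Icc (0 : ℝ) 1) :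
    rho F k i s = rho F' k i s := by
  unfold rho
  rw [expRank_field_indep F F' k i s, expRank_field_indep F F' k (i - 1) s]
end

section
/- Let s ∈ [0,1] and let (X_k) be the random process with X_0 = s and X_{k+1} = ℓ(X_k) = 2X_k − X_k² or X_{k+1} = r(X_k) = X_k², each choice independently with probability 1/2 at each step. Then (X_k) is a martingale with values in [0,1], it converges almost surely, its almost-sure limit X_∞ takes values in {0,1}, and P(X_∞ = 1) = s. -/
open MeasureTheory ProbabilityTheory Filter

/-- Let `s ∈ [0,1]` and let `(X_k)` be the random process with `X_0 = s`
and `X_{k+1} = ℓ(X_k) = 2X_k − X_k²` or `X_{k+1} = r(X_k) = X_k²`, each choice made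
independently with probability `1/2` at each step (encoded by i.i.d. fair coins `C_k`).
Then `(X_k)` is a martingale with values in `[0,1]`, it converges almost surely, its
almost-sure limit `X_∞` takes values in `{0,1}`, and `P(X_∞ = 1) = s`. -/
theorem polarization_martingale {Ω : Type*} [MeasurableSpace Ω] (μ : Measure Ω)
    [IsProbabilityMeasure μ] (s : ℝ) (hs : s ∈ Set.Icc (0 : ℝ) 1)
    (C : ℕ → Ω → Bool) (hCmeas : ∀ k, Measurable (C k))
    (hCindep : iIndepFun C μ)
    (hCfair : ∀ k, μ {ω | C k ω = true} = 1 / 2)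
    (X : ℕ → Ω → ℝ) (hX0 : ∀ ω, X 0 ω = s)
    (hXrec : ∀ k ω, X (k + 1) ω =
      if C k ω then 2 * X k ω - (X k ω) ^ 2 else (X k ω) ^ 2) :
    (∃ ℱ : Filtration ℕ ‹MeasurableSpace Ω›, Martingale X ℱ μ) ∧
    (∀ k ω, X k ω ∈ Set.Icc (0 : ℝ) 1) ∧
    (∃ Xinf : Ω → ℝ,
      (∀ᵐ ω ∂μ, Tendsto (fun k => X k ω) atTop (nhds (Xinf ω))) ∧
      (∀ᵐ ω ∂μ, Xinf ω = 0 ∨ Xinf ω = 1) ∧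
      μ {ω | Xinf ω = 1} = ENNReal.ofReal s) := by
  classical
  obtain ⟨hs0, hs1⟩ := hs
  -- bounds
  have hbd : ∀ k ω, X k ω ∈ Set.Icc (0 : ℝ) 1 := by
    intro k
    induction k with
    | zero => intro ω; rw [hX0]; exact ⟨hs0, hs1⟩
    | succ k ih =>
      intro ω
      obtain ⟨h0, h1⟩ := ih ω
      rw [hXrec]
      by_cases hc : C k ω = true
      · rw [if_pos hc]; constructor <;> nlinarith
      · rw [if_neg hc]; constructor <;> nlinarith
  -- the filtration
  set mf : ℕ → MeasurableSpace Ω :=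
    fun k => ⨆ i ∈ Set.Iio k, MeasurableSpace.comap (C i) inferInstance with hmf_def
  have hmf_le : ∀ k, mf k ≤ ‹MeasurableSpace Ω› :=
    fun k => iSup₂_le fun i _ => (hCmeas i).comap_le
  have hmf_mono : Monotone mf :=
    fun a b hab => biSup_mono fun i hi => lt_of_lt_of_le hi hab
  set ℱ : Filtration ℕ ‹MeasurableSpace Ω› := ⟨mf, hmf_mono, hmf_le⟩ with hℱ_def
  -- measurability of X k with respect to mf k
  have hXm : ∀ k, Measurable[mf k] (X k) := by
    intro k
    induction k with
    | zero =>
      have : X 0 = fun _ => s := funext hX0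
      rw [this]; exact measurable_const
    | succ k ih =>
      have hle : MeasurableSpace.comap (C k) inferInstance ≤ mf (k + 1) :=
        le_biSup (f := fun i => MeasurableSpace.comap (C i) inferInstance)
          (Set.mem_Iio.2 (Nat.lt_succ_self k))
      have hC : Measurable[mf (k + 1)] (C k) := fun t ht => hle _ ⟨t, ht, rfl⟩
      have hXk : Measurable[mf (k + 1)] (X k) :=
        ih.mono (hmf_mono (Nat.le_succ k)) le_rfl
      have hXe : X (k + 1) = fun ω =>
          if C k ω then 2 * X k ω - (X k ω) ^ 2 else (X k ω) ^ 2 :=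
        funext (hXrec k)
      rw [hXe]
      have hcond : MeasurableSet[mf (k + 1)] {ω | C k ω = true} :=
        hC (measurableSet_singleton true)
      exact Measurable.ite hcond
        ((measurable_const.mul hXk).sub (hXk.pow_const 2)) (hXk.pow_const 2)
  have hXam : ∀ k, Measurable (X k) := fun k => (hXm k).mono (hmf_le k) le_rfl
  -- integrability
  have hintb : ∀ (f : Ω → ℝ), Measurable f → (∀ ω, |f ω| ≤ 3) → Integrable f μ := by
    intro f hf hb
    exact ⟨hf.aestronglyMeasurable,
      HasFiniteIntegral.of_bounded (C := 3) (ae_of_all μ fun ω => by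
        simpa [Real.norm_eq_abs] using hb ω)⟩
  have hint : ∀ k, Integrable (X k) μ := by
    intro k
    refine hintb _ (hXam k) fun ω => ?_
    obtain ⟨h0, h1⟩ := hbd k ω
    rw [abs_le]; constructor <;> linarith
  -- one-step martingale property
  have hstep : ∀ k, X k =ᵐ[μ] μ[X (k + 1)|mf k] := by
    intro k
    set A : Set Ω := {ω | C k ω = true} with hA_def
    have hA : MeasurableSet A := hCmeas k (measurableSet_singleton true)
    set g : Ω → ℝ := fun ω => 2 * X k ω - 2 * (X k ω) ^ 2 with hg_def
    set h : Ω → ℝ := A.indicator fun _ => (1 : ℝ) with hh_def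
    have hdecomp : X (k + 1) = (fun ω => (X k ω) ^ 2) + g * h := by
      funext ω
      simp only [Pi.add_apply, Pi.mul_apply]
      rw [hXrec]
      by_cases hc : C k ω = true
      · rw [if_pos hc]
        simp only [hg_def, hh_def, Set.indicator_of_mem (show ω ∈ A from hc)]
        ring
      · rw [if_neg hc]
        simp only [hg_def, hh_def, Set.indicator_of_notMem (show ω ∉ A from hc),
          mul_zero, add_zero]
    have hsq_int : Integrable (fun ω => (X k ω) ^ 2) μ := by
      refine hintb _ ((hXam k).pow_const 2) fun ω => ?_
      obtain ⟨h0, h1⟩ := hbd k ω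
      rw [abs_le]; constructor <;> nlinarith
    have hh_meas : Measurable h :=
      (measurable_const.indicator hA)
    have hh_int : Integrable h μ := by
      refine hintb _ hh_meas fun ω => ?_
      rw [hh_def]
      by_cases hc : ω ∈ A
      · rw [Set.indicator_of_mem hc]; norm_num
      · rw [Set.indicator_of_notMem hc]; norm_num
    have hgh_int : Integrable (g * h) μ := by
      refine hintb _ (((measurable_const.mul (hXam k)).sub
        (measurable_const.mul ((hXam k).pow_const 2))).mul hh_meas) fun ω => ?_
      obtain ⟨h0, h1⟩ := hbd k ω
      simp only [Pi.mul_apply]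
      rw [abs_mul]
      have hg_abs : |g ω| ≤ 3 := by
        simp only [hg_def]; rw [abs_le]; constructor <;> nlinarith
      have hh_abs : |h ω| ≤ 1 := by
        rw [hh_def]
        by_cases hc : ω ∈ A
        · rw [Set.indicator_of_mem hc]; norm_num
        · rw [Set.indicator_of_notMem hc]; norm_num
      nlinarith [abs_nonneg (g ω), abs_nonneg (h ω)]
    -- conditional expectation of the coin indicator
    have hIndep : Indep (MeasurableSpace.comap (C k) inferInstance) (mf k) μ := by
      have h' := indep_iSup_of_disjoint
        (m := fun i => MeasurableSpace.comap (C i) inferInstance)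
        (fun i => (hCmeas i).comap_le) ((iIndepFun_iff_iIndep _ _ _).mp hCindep)
        (S := {k}) (T := Set.Iio k)
        (by simp [Set.disjoint_left])
      simpa [hmf_def] using h'
    have hh_sm : StronglyMeasurable[MeasurableSpace.comap (C k) inferInstance] h := by
      refine (stronglyMeasurable_const.indicator ?_)
      exact ⟨{true}, trivial, rfl⟩
    have hEh : ∫ ω, h ω ∂μ = 1 / 2 := by
      rw [hh_def, integral_indicator_const (1 : ℝ) hA, smul_eq_mul, mul_one,
        hA_def, measureReal_def, hCfair k]
      simp [ENNReal.toReal_div]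
    have hcond_h : μ[h|mf k] =ᵐ[μ] fun _ => (1 / 2 : ℝ) := by
      have := condExp_indep_eq (μ := μ) (f := h)
        ((hCmeas k).comap_le) (hmf_le k) hh_sm hIndep
      rw [hEh] at this
      exact this
    have hcond_sq : μ[fun ω => (X k ω) ^ 2|mf k] = fun ω => (X k ω) ^ 2 :=
      condExp_of_stronglyMeasurable (hmf_le k)
        ((hXm k).pow_const 2).stronglyMeasurable hsq_int
    have hg_sm : StronglyMeasurable[mf k] g :=
      ((measurable_const.mul (hXm k)).sub
        (measurable_const.mul ((hXm k).pow_const 2))).stronglyMeasurable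
    have hcond_gh : μ[g * h|mf k] =ᵐ[μ] g * μ[h|mf k] :=
      condExp_mul_of_stronglyMeasurable_left hg_sm hgh_int hh_int
    have hmain : μ[X (k + 1)|mf k] =ᵐ[μ]
        (fun ω => (X k ω) ^ 2) + g * fun _ => (1 / 2 : ℝ) := by
      calc μ[X (k + 1)|mf k]
          =ᵐ[μ] μ[fun ω => (X k ω) ^ 2|mf k] + μ[g * h|mf k] := by
            rw [hdecomp]; exact condExp_add hsq_int hgh_int (mf k)
        _ =ᵐ[μ] (fun ω => (X k ω) ^ 2) + g * μ[h|mf k] := by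
            rw [hcond_sq]
            exact EventuallyEq.add EventuallyEq.rfl hcond_gh
        _ =ᵐ[μ] (fun ω => (X k ω) ^ 2) + g * fun _ => (1 / 2 : ℝ) :=
            EventuallyEq.add EventuallyEq.rfl
              (EventuallyEq.mul EventuallyEq.rfl hcond_h)
    have hfin : ((fun ω => (X k ω) ^ 2) + g * fun _ => (1 / 2 : ℝ)) =ᵐ[μ] X k := by
      refine ae_of_all μ fun ω => ?_
      simp only [Pi.add_apply, Pi.mul_apply, hg_def]
      ring
    exact (hmain.trans hfin).symm
  -- the martingale
  have hadp : StronglyAdapted ℱ X := fun k => (hXm k).stronglyMeasurable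
  have hmart : Martingale X ℱ μ := martingale_nat hadp hint hstep
  refine ⟨⟨ℱ, hmart⟩, hbd, ?_⟩
  -- convergence
  have hbdd : ∀ n, eLpNorm (X n) 1 μ ≤ ((1 : NNReal) : ENNReal) := by
    intro n
    refine le_trans (eLpNorm_le_of_ae_bound (C := 1) (ae_of_all μ fun ω => ?_)) ?_
    · obtain ⟨h0, h1⟩ := hbd n ω
      rw [Real.norm_eq_abs, abs_le]; constructor <;> linarith
    · simp
  set Xinf : Ω → ℝ := ℱ.limitProcess X μ with hXinf_def
  have htend : ∀ᵐ ω ∂μ, Tendsto (fun k => X k ω) atTop (nhds (Xinf ω)) :=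
    hmart.submartingale.ae_tendsto_limitProcess hbdd
  -- values of the limit
  have h01 : ∀ᵐ ω ∂μ, Xinf ω = 0 ∨ Xinf ω = 1 := by
    filter_upwards [htend] with ω hω
    have heq : ∀ k, |X (k + 1) ω - X k ω| = X k ω * (1 - X k ω) := by
      intro k
      obtain ⟨h0, h1⟩ := hbd k ω
      rw [hXrec]
      by_cases hc : C k ω = true
      · rw [if_pos hc, abs_of_nonneg (by nlinarith)]; ring
      · rw [if_neg hc, abs_of_nonpos (by nlinarith)]; ring
    have h1 : Tendsto (fun k => |X (k + 1) ω - X k ω|) atTop (nhds 0) := by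
      have h' : Tendsto (fun k => X (k + 1) ω) atTop (nhds (Xinf ω)) :=
        hω.comp (tendsto_add_atTop_nat 1)
      have := (h'.sub hω).abs
      simpa using this
    have h2 : Tendsto (fun k => |X (k + 1) ω - X k ω|) atTop
        (nhds (Xinf ω * (1 - Xinf ω))) := by
      simp only [heq]
      exact hω.mul (tendsto_const_nhds.sub hω)
    have h3 : Xinf ω * (1 - Xinf ω) = 0 := tendsto_nhds_unique h2 h1
    rcases mul_eq_zero.1 h3 with h | h
    · exact Or.inl h
    · exact Or.inr (by linarith)
  refine ⟨Xinf, htend, h01, ?_⟩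
  -- identification of the measure
  have hXinf_sm : StronglyMeasurable Xinf := Filtration.stronglyMeasurable_limit_process'
  have hAmeas : MeasurableSet {ω | Xinf ω = 1} :=
    hXinf_sm.measurable (measurableSet_singleton 1)
  have hEX : ∀ n, ∫ ω, X n ω ∂μ = s := by
    intro n
    have h1 : μ[X n|ℱ 0] =ᵐ[μ] X 0 := hmart.condExp_ae_eq (Nat.zero_le n)
    have h2 := integral_condExp (μ := μ) (f := X n) (ℱ.le 0)
    rw [← h2, integral_congr_ae h1]
    have : X 0 = fun _ => s := funext hX0
    rw [this, integral_const]
    simp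
  have hI : Tendsto (fun n => ∫ ω, X n ω ∂μ) atTop (nhds (∫ ω, Xinf ω ∂μ)) := by
    refine tendsto_integral_of_dominated_convergence (fun _ => (1 : ℝ))
      (fun n => (hXam n).aestronglyMeasurable) (integrable_const 1)
      (fun n => ae_of_all μ fun ω => ?_) htend
    obtain ⟨h0, h1⟩ := hbd n ω
    show ‖X n ω‖ ≤ (1 : ℝ)
    rw [Real.norm_eq_abs, abs_le]; constructor <;> linarith
  have hEinf : ∫ ω, Xinf ω ∂μ = s := by
    simp only [hEX] at hI
    exact tendsto_nhds_unique hI tendsto_const_nhds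
  have hind : Xinf =ᵐ[μ] Set.indicator {ω | Xinf ω = 1} fun _ => (1 : ℝ) := by
    filter_upwards [h01] with ω hω
    rcases hω with h | h
    · rw [h, Set.indicator_of_notMem]
      intro hmem
      rw [Set.mem_setOf_eq, h] at hmem
      norm_num at hmem
    · have hmem : ω ∈ {ω | Xinf ω = 1} := h
      rw [Set.indicator_of_mem hmem]
      exact h
  have htoReal : (μ {ω | Xinf ω = 1}).toReal = s := by
    rw [← hEinf, integral_congr_ae hind, integral_indicator_const (1 : ℝ) hAmeas]
    simp [measureReal_def]
  rw [← htoReal, ENNReal.ofReal_toReal (measure_ne_top μ _)]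
end

section
/- Let n be a power of two, s ∈ [0,1], let H' ⊆ {1,…,i−1} be any subset of row indices preceding i, and let M be the submatrix of G_n formed by the rows indexed by H' ∪ {i}. Then the probability (over the random column subset) that the row of M[s] corresponding to index i lies in the span of the rows of M[s] indexed by H' is at most 1 − ρ(n,i,s). -/
open scoped Classical

/-! ### Auxiliary material -/

section

open Module Submodule

/-- Rows of `Gmat` restricted to a column set `S`. -/
def rowVec (F : Type*) [Field F] (k : ℕ) (S : Finset (Fin (2 ^ k))) :
    Fin (2 ^ k) → (S → F) :=
  fun r c => Gmat F k r (c : Fin (2 ^ k))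

lemma my_finrank_span_insert_of_not_mem {F V : Type*} [Field F] [AddCommGroup V] [Module F V]
    [FiniteDimensional F V] {s : Set V} {x : V} (h : x ∉ Submodule.span F s) :
    finrank F (Submodule.span F (insert x s)) = finrank F (Submodule.span F s) + 1 := by
  have hx : x ≠ 0 := fun h0 => h (h0 ▸ Submodule.zero_mem _)
  have hinf : (Submodule.span F {x}) ⊓ Submodule.span F s = ⊥ := by
    rw [eq_bot_iff]
    rintro y hy
    obtain ⟨hy1, hy2⟩ := Submodule.mem_inf.mp hy
    obtain ⟨c, rfl⟩ := Submodule.mem_span_singleton.mp hy1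
    rcases eq_or_ne c 0 with rfl | hc
    · simp
    · exact absurd (by
        have h2 : c⁻¹ • (c • x) ∈ Submodule.span F s := Submodule.smul_mem _ _ hy2
        rwa [smul_smul, inv_mul_cancel₀ hc, one_smul] at h2) h
  have hh := Submodule.finrank_sup_add_finrank_inf_eq (Submodule.span F {x}) (Submodule.span F s)
  rw [hinf, finrank_bot, add_zero, finrank_span_singleton hx] at hh
  rw [Submodule.span_insert, hh, add_comm]

lemma sum_weights (n : ℕ) (s : ℝ) :
    ∑ S : Finset (Fin n), s ^ S.card * (1 - s) ^ (n - S.card) = 1 := by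
  have h : (1:ℝ) = ∑ t ∈ (Finset.univ : Finset (Fin n)).powerset,
      s ^ t.card * (1 - s) ^ (n - t.card) := by
    calc (1:ℝ) = ∏ _i ∈ (Finset.univ : Finset (Fin n)), (s + (1 - s)) := by simp
    _ = ∑ t ∈ (Finset.univ : Finset (Fin n)).powerset,
          (∏ _i ∈ t, s) * ∏ _i ∈ Finset.univ \ t, (1 - s) := Finset.prod_add _ _ _
    _ = _ := by
        refine Finset.sum_congr rfl fun t ht => ?_
        rw [Finset.prod_const, Finset.prod_const,
          Finset.card_sdiff_of_subset (Finset.subset_univ t), Finset.card_univ, Fintype.card_fin]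
  rw [Finset.powerset_univ] at h
  exact h.symm

lemma rank_top_eq (F : Type*) [Field F] (k j : ℕ) (_hj : j ≤ 2 ^ k) (S : Finset (Fin (2 ^ k))) :
    ((topRows F (Gmat F k) j).submatrix id (fun x : S => (x : Fin (2 ^ k)))).rank =
      finrank F (Submodule.span F (rowVec F k S '' {r : Fin (2 ^ k) | (r : ℕ) < j})) := by
  rw [Matrix.rank_eq_finrank_span_row]
  have hset : Set.range ((topRows F (Gmat F k) j).submatrix id (fun x : S => (x : Fin (2 ^ k)))) =
      rowVec F k S '' {r : Fin (2 ^ k) | (r : ℕ) < j} := by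
    ext y
    simp only [Set.mem_range, Set.mem_image, Set.mem_setOf_eq]
    constructor
    · rintro ⟨r, rfl⟩
      exact ⟨⟨(r : ℕ), lt_of_lt_of_le r.2 (min_le_right j _)⟩,
        lt_of_lt_of_le r.2 (min_le_left j _), rfl⟩
    · rintro ⟨r, hr, rfl⟩
      exact ⟨⟨(r : ℕ), lt_min hr r.2⟩, rfl⟩
  exact congrArg (fun t => finrank F (span F t)) hset

lemma rank_step (F : Type*) [Field F] (k i : ℕ) (hi1 : 1 ≤ i) (hi2 : i ≤ 2 ^ k)
    (S : Finset (Fin (2 ^ k))) :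
    finrank F (Submodule.span F (rowVec F k S '' {r : Fin (2 ^ k) | (r : ℕ) < i})) =
      finrank F (Submodule.span F (rowVec F k S '' {r : Fin (2 ^ k) | (r : ℕ) < i - 1})) +
      (if rowVec F k S ⟨i - 1, Nat.lt_of_lt_of_le (Nat.sub_lt hi1 Nat.one_pos) hi2⟩ ∈
          Submodule.span F (rowVec F k S '' {r : Fin (2 ^ k) | (r : ℕ) < i - 1})
       then 0 else 1) := by
  have hset : rowVec F k S '' {r : Fin (2 ^ k) | (r : ℕ) < i} =
      insert (rowVec F k S ⟨i - 1, Nat.lt_of_lt_of_le (Nat.sub_lt hi1 Nat.one_pos) hi2⟩)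
        (rowVec F k S '' {r : Fin (2 ^ k) | (r : ℕ) < i - 1}) := by
    ext y
    simp only [Set.mem_image, Set.mem_insert_iff, Set.mem_setOf_eq]
    constructor
    · rintro ⟨r, hr, rfl⟩
      rcases Nat.lt_or_ge (r : ℕ) (i - 1) with h | h
      · exact Or.inr ⟨r, h, rfl⟩
      · exact Or.inl (congrArg _ (Fin.ext (show (r : ℕ) = i - 1 by omega)))
    · rintro (rfl | ⟨r, hr, rfl⟩)
      · exact ⟨⟨i - 1, Nat.lt_of_lt_of_le (Nat.sub_lt hi1 Nat.one_pos) hi2⟩, show i - 1 < i by omega, rfl⟩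
      · exact ⟨r, by omega, rfl⟩
  rw [hset]
  split_ifs with h
  · rw [Submodule.span_insert_eq_span h, add_zero]
  · rw [my_finrank_span_insert_of_not_mem h]

end

/-- Let `n = 2^k`, `s ∈ [0,1]`, `1 ≤ i ≤ n`, and let `H' ⊆ {1,…,i−1}` be
any subset of row indices preceding `i`. Then the probability (over the random column
subset) that the row of index `i` of the submatrix of `G_n[s]` with rows `H' ∪ {i}` lies in
the span of the rows indexed by `H'` is at most `1 − ρ(n,i,s)`. -/
theorem prob_row_dependent_le (F : Type*) [Field F] (k : ℕ) (s : ℝ)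
    (hs : s ∈ Set.Icc (0 : ℝ) 1) (i : ℕ) (hi1 : 1 ≤ i) (hi2 : i ≤ 2 ^ k)
    (H' : Finset ℕ) (hH' : ∀ r ∈ H', 1 ≤ r ∧ r < i) :
    prEvent (2 ^ k) s (fun S =>
      (fun j : S => Gmat F k ⟨i - 1, by omega⟩ (j : Fin (2 ^ k))) ∈
        Submodule.span F (Set.range fun r : H' =>
          fun j : S => Gmat F k ⟨(r : ℕ) - 1, by have := hH' r r.2; omega⟩ (j : Fin (2 ^ k))))
      ≤ 1 - rho F k i s := by
  have him : i - 1 < 2 ^ k := by omega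
  have hrho : rho F k i s = ∑ S : Finset (Fin (2 ^ k)),
      s ^ S.card * (1 - s) ^ (2 ^ k - S.card) *
      (if rowVec F k S ⟨i - 1, him⟩ ∈
          Submodule.span F (rowVec F k S '' {r : Fin (2 ^ k) | (r : ℕ) < i - 1})
       then (0 : ℝ) else 1) := by
    unfold rho expRank
    rw [← Finset.sum_sub_distrib]
    refine Finset.sum_congr rfl fun S _ => ?_
    rw [rank_top_eq F k i hi2 S, rank_top_eq F k (i - 1) (by omega) S,
      rank_step F k i hi1 hi2 S]
    by_cases hdep : rowVec F k S ⟨i - 1, him⟩ ∈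
        Submodule.span F (rowVec F k S '' {r : Fin (2 ^ k) | (r : ℕ) < i - 1})
    · rw [if_pos hdep, if_pos hdep]; push_cast; ring
    · rw [if_neg hdep, if_neg hdep]; push_cast; ring
  have hsum : (∑ S : Finset (Fin (2 ^ k)),
      s ^ S.card * (1 - s) ^ (2 ^ k - S.card) *
      (if rowVec F k S ⟨i - 1, him⟩ ∈
          Submodule.span F (rowVec F k S '' {r : Fin (2 ^ k) | (r : ℕ) < i - 1})
       then (1 : ℝ) else 0)) + rho F k i s = 1 := by
    rw [hrho, ← Finset.sum_add_distrib]
    calc (∑ S : Finset (Fin (2 ^ k)),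
        (s ^ S.card * (1 - s) ^ (2 ^ k - S.card) *
          (if rowVec F k S ⟨i - 1, him⟩ ∈
              Submodule.span F (rowVec F k S '' {r : Fin (2 ^ k) | (r : ℕ) < i - 1})
           then (1 : ℝ) else 0) +
         s ^ S.card * (1 - s) ^ (2 ^ k - S.card) *
          (if rowVec F k S ⟨i - 1, him⟩ ∈
              Submodule.span F (rowVec F k S '' {r : Fin (2 ^ k) | (r : ℕ) < i - 1})
           then (0 : ℝ) else 1)))
        = ∑ S : Finset (Fin (2 ^ k)), s ^ S.card * (1 - s) ^ (2 ^ k - S.card) :=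
          Finset.sum_congr rfl fun S _ => by split_ifs <;> ring
    _ = 1 := sum_weights _ _
  have key : 1 - rho F k i s = ∑ S : Finset (Fin (2 ^ k)),
      s ^ S.card * (1 - s) ^ (2 ^ k - S.card) *
      (if rowVec F k S ⟨i - 1, him⟩ ∈
          Submodule.span F (rowVec F k S '' {r : Fin (2 ^ k) | (r : ℕ) < i - 1})
       then (1 : ℝ) else 0) := by linarith
  rw [key]
  unfold prEvent
  refine Finset.sum_le_sum fun S _ => ?_
  have hw : 0 ≤ s ^ S.card * (1 - s) ^ (2 ^ k - S.card) :=
    mul_nonneg (pow_nonneg hs.1 _) (pow_nonneg (by linarith [hs.2]) _)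
  by_cases hP : (fun j : S => Gmat F k ⟨i - 1, by omega⟩ (j : Fin (2 ^ k))) ∈
      Submodule.span F (Set.range fun r : H' =>
        fun j : S => Gmat F k ⟨(r : ℕ) - 1, by have := hH' r r.2; omega⟩ (j : Fin (2 ^ k)))
  · rw [if_pos hP]
    have hdep : rowVec F k S ⟨i - 1, him⟩ ∈
        Submodule.span F (rowVec F k S '' {r : Fin (2 ^ k) | (r : ℕ) < i - 1}) := by
      refine Submodule.span_mono ?_ hP
      rintro _ ⟨⟨r, hr⟩, rfl⟩
      have hrr := hH' r hr
      exact ⟨⟨r - 1, by omega⟩, show r - 1 < i - 1 by omega, rfl⟩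
    rw [if_pos hdep, mul_one]
  · rw [if_neg hP]
    split_ifs <;> simp [hw]
end
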